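/- arXiv:2511.18737 — 6 statements merged into one kernel-verified Lean document; each statement's English description precedes it below -/
import Mathlib

section
/- Let G = ([m], ℰ) be an undirected connected graph with incidence matrix D ∈ {−1,0,1}^{|ℰ|×m} and algebraic connectivity λ_{m−1}(G) > 0 (the smallest positive eigenvalue of the Laplacian L = DᵀD). Let D† be the Moore–Penrose pseudoinverse of D, let μ be the maximum ℓ2 norm of a column of D†, and let μ' be the maximum ℓ2 norm of a row of D†. Then μ ≤ min(√2/λ_{m−1}(G), 1/√λ_{m−1}(G)) and μ' ≤ 1/√λ_{m−1}(G). -/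
open Matrix
open scoped Kronecker

/-- `D` is the incidence matrix of (an orientation of) an undirected graph:
each row has exactly one `+1` entry and one `-1` entry, and is `0` elsewhere. -/
def IsIncidenceMatrix {E m : ℕ} (D : Matrix (Fin E) (Fin m) ℝ) : Prop :=
  ∀ j : Fin E, ∃ a b : Fin m, a ≠ b ∧ D j a = 1 ∧ D j b = -1 ∧
    ∀ i : Fin m, i ≠ a → i ≠ b → D j i = 0

/-- The undirected simple graph underlying an incidence matrix. -/
def incidenceGraph {E m : ℕ} (D : Matrix (Fin E) (Fin m) ℝ) : SimpleGraph (Fin m) :=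
  SimpleGraph.fromRel (fun a b => ∃ j : Fin E, D j a = 1 ∧ D j b = -1)

/-- `B` is the Moore–Penrose pseudoinverse of `A` (the four Penrose conditions). -/
def IsMoorePenrose {α β : Type*} [Fintype α] [Fintype β]
    (A : Matrix α β ℝ) (B : Matrix β α ℝ) : Prop :=
  A * B * A = A ∧ B * A * B = B ∧ (A * B)ᵀ = A * B ∧ (B * A)ᵀ = B * A

/-- `lam` is the smallest positive eigenvalue of the matrix `L`. -/
def IsSmallestPosEigenvalue {k : ℕ} (L : Matrix (Fin k) (Fin k) ℝ) (lam : ℝ) : Prop :=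
  0 < lam ∧ (∃ v : Fin k → ℝ, v ≠ 0 ∧ L *ᵥ v = lam • v) ∧
    ∀ c : ℝ, 0 < c → (∃ v : Fin k → ℝ, v ≠ 0 ∧ L *ᵥ v = c • v) → lam ≤ c

lemma dp_mulVec_left' {a b : ℕ} (A : Matrix (Fin a) (Fin b) ℝ) (x : Fin b → ℝ) (y : Fin a → ℝ) :
    (A *ᵥ x) ⬝ᵥ y = x ⬝ᵥ (Aᵀ *ᵥ y) := by
  rw [dotProduct_comm, dotProduct_mulVec, mulVec_transpose, dotProduct_comm]

lemma quad_lower_bound' {k : ℕ} {L : Matrix (Fin k) (Fin k) ℝ} (hL : L.IsHermitian) (lam : ℝ)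
    (hev : ∀ i, hL.eigenvalues i = 0 ∨ lam ≤ hL.eigenvalues i)
    (w : Fin k → ℝ) (hw : ∀ u : Fin k → ℝ, L *ᵥ u = 0 → w ⬝ᵥ u = 0) :
    lam * (w ⬝ᵥ w) ≤ w ⬝ᵥ (L *ᵥ w) := by
  classical
  set U : Matrix (Fin k) (Fin k) ℝ := (hL.eigenvectorUnitary : Matrix (Fin k) (Fin k) ℝ) with hU
  have hU1 : U * star U = 1 := (Matrix.mem_unitaryGroup_iff).mp hL.eigenvectorUnitary.2
  have hU2 : star U * U = 1 := (Matrix.mem_unitaryGroup_iff').mp hL.eigenvectorUnitary.2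
  have hsU : star U = Uᵀ := by
    rw [Matrix.star_eq_conjTranspose, conjTranspose_eq_transpose_of_trivial]
  set μ : Fin k → ℝ := hL.eigenvalues with hμ
  have hspec : L = U * Matrix.diagonal μ * star U := by
    simpa [RCLike.ofReal_real_eq_id] using hL.spectral_theorem
  set c : Fin k → ℝ := star U *ᵥ w with hc
  have hcs : ∀ i, μ i = 0 → c i = 0 := by
    intro i hi
    have hcol : ∀ x, (hL.eigenvectorBasis i : Fin k → ℝ) x = U x i := fun x =>
      (hL.eigenvectorUnitary_apply x i).symm
    have heig := hL.mulVec_eigenvectorBasis i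
    rw [← hμ, hi, zero_smul] at heig
    have h0 : w ⬝ᵥ (hL.eigenvectorBasis i : Fin k → ℝ) = 0 := hw _ heig
    have : c i = w ⬝ᵥ (hL.eigenvectorBasis i : Fin k → ℝ) := by
      simp only [hc, mulVec, dotProduct, hsU, transpose_apply]
      exact Finset.sum_congr rfl fun x _ => by rw [hcol x, mul_comm]
    rw [this, h0]
  have hwUc : w = U *ᵥ c := by
    rw [hc, mulVec_mulVec, hU1, one_mulVec]
  have h2 : w ⬝ᵥ w = ∑ i, c i ^ 2 := by
    conv_lhs => rw [hwUc]
    rw [dp_mulVec_left', ← hsU, mulVec_mulVec, hU2, one_mulVec]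
    simp [dotProduct, sq]
  have h1 : w ⬝ᵥ (L *ᵥ w) = ∑ i, μ i * c i ^ 2 := by
    conv_lhs => rw [hspec, ← mulVec_mulVec, ← mulVec_mulVec, ← hc, hwUc,
      dp_mulVec_left' U c (U *ᵥ (Matrix.diagonal μ *ᵥ c)), mulVec_mulVec, ← hsU, hU2, one_mulVec]
    simp only [dotProduct, mulVec_diagonal]
    exact Finset.sum_congr rfl fun i _ => by ring
  rw [h1, h2, Finset.mul_sum]
  refine Finset.sum_le_sum fun i _ => ?_
  rcases hev i with h | h
  · rw [h, hcs i h]; simp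
  · exact mul_le_mul_of_nonneg_right h (sq_nonneg _)

lemma pinv_setup' {p n : ℕ} (A : Matrix (Fin p) (Fin n) ℝ) (B : Matrix (Fin n) (Fin p) ℝ)
    (h1 : A * B * A = A) (h2 : B * A * B = B) (h3 : (A * B)ᵀ = A * B) (h4 : (B * A)ᵀ = B * A)
    (lam : ℝ) (hpos : 0 < lam)
    (hmin : ∀ c : ℝ, 0 < c → (∃ v : Fin n → ℝ, v ≠ 0 ∧ (Aᵀ * A) *ᵥ v = c • v) → lam ≤ c)
    (v : Fin p → ℝ) :
    lam * ((B *ᵥ v) ⬝ᵥ (B *ᵥ v)) ≤ (B *ᵥ v) ⬝ᵥ ((Aᵀ * A) *ᵥ (B *ᵥ v)) := by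
  classical
  have hLsym : (Aᵀ * A).IsHermitian := by
    rw [Matrix.IsHermitian, conjTranspose_eq_transpose_of_trivial, transpose_mul,
      transpose_transpose]
  have hker : ∀ u : Fin n → ℝ, (Aᵀ * A) *ᵥ u = 0 → A *ᵥ u = 0 := by
    intro u hu
    have h0 : (A *ᵥ u) ⬝ᵥ (A *ᵥ u) = 0 := by
      rw [dp_mulVec_left', mulVec_mulVec, hu, dotProduct_zero]
    exact dotProduct_self_eq_zero.mp h0
  have hselfnn : ∀ {q : ℕ} (x : Fin q → ℝ), 0 ≤ x ⬝ᵥ x := by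
    intro q x
    exact Finset.sum_nonneg fun i _ => mul_self_nonneg _
  have hev : ∀ i, hLsym.eigenvalues i = 0 ∨ lam ≤ hLsym.eigenvalues i := by
    intro i
    by_cases h : hLsym.eigenvalues i = 0
    · exact Or.inl h
    · right
      set u : Fin n → ℝ := (hLsym.eigenvectorBasis i : Fin n → ℝ) with hu
      have hune : u ≠ 0 := by
        intro h0
        apply hLsym.eigenvectorBasis.orthonormal.ne_zero i
        ext x
        exact congrFun h0 x
      have heig : (Aᵀ * A) *ᵥ u = hLsym.eigenvalues i • u := hLsym.mulVec_eigenvectorBasis i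
      have hupos : 0 < u ⬝ᵥ u :=
        lt_of_le_of_ne (hselfnn u) (Ne.symm (fun h0 => hune (dotProduct_self_eq_zero.mp h0)))
      have hq : u ⬝ᵥ ((Aᵀ * A) *ᵥ u) = hLsym.eigenvalues i * (u ⬝ᵥ u) := by
        rw [heig, dotProduct_smul, smul_eq_mul]
      have hqnn : 0 ≤ u ⬝ᵥ ((Aᵀ * A) *ᵥ u) := by
        rw [← mulVec_mulVec, ← dp_mulVec_left']
        exact hselfnn _
      have hnn : 0 ≤ hLsym.eigenvalues i := by nlinarith
      exact hmin _ (lt_of_le_of_ne hnn (Ne.symm h)) ⟨u, hune, heig⟩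
  set w : Fin n → ℝ := B *ᵥ v with hwdef
  have hworth : ∀ u : Fin n → ℝ, (Aᵀ * A) *ᵥ u = 0 → w ⬝ᵥ u = 0 := by
    intro u hu
    have hAu : A *ᵥ u = 0 := hker u hu
    have hwfix : w = (B * A) *ᵥ w := by
      rw [hwdef, mulVec_mulVec, h2]
    calc w ⬝ᵥ u = ((B * A) *ᵥ w) ⬝ᵥ u := by rw [← hwfix]
      _ = w ⬝ᵥ ((B * A)ᵀ *ᵥ u) := dp_mulVec_left' _ _ _
      _ = w ⬝ᵥ ((B * A) *ᵥ u) := by rw [h4]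
      _ = w ⬝ᵥ (B *ᵥ (A *ᵥ u)) := by rw [mulVec_mulVec]
      _ = 0 := by rw [hAu, mulVec_zero, dotProduct_zero]
  exact quad_lower_bound' hLsym lam hev w hworth

lemma pinv_norm_bound' {p n : ℕ} (A : Matrix (Fin p) (Fin n) ℝ) (B : Matrix (Fin n) (Fin p) ℝ)
    (h1 : A * B * A = A) (h2 : B * A * B = B) (h3 : (A * B)ᵀ = A * B) (h4 : (B * A)ᵀ = B * A)
    (lam : ℝ) (hpos : 0 < lam)
    (hmin : ∀ c : ℝ, 0 < c → (∃ v : Fin n → ℝ, v ≠ 0 ∧ (Aᵀ * A) *ᵥ v = c • v) → lam ≤ c)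
    (v : Fin p → ℝ) :
    lam * ((B *ᵥ v) ⬝ᵥ (B *ᵥ v)) ≤ v ⬝ᵥ v := by
  classical
  have hselfnn : ∀ {q : ℕ} (x : Fin q → ℝ), 0 ≤ x ⬝ᵥ x :=
    fun x => Finset.sum_nonneg fun i _ => mul_self_nonneg _
  have hkey := pinv_setup' A B h1 h2 h3 h4 lam hpos hmin v
  have hq1 : (B *ᵥ v) ⬝ᵥ ((Aᵀ * A) *ᵥ (B *ᵥ v)) = ((A * B) *ᵥ v) ⬝ᵥ ((A * B) *ᵥ v) := by
    calc (B *ᵥ v) ⬝ᵥ ((Aᵀ * A) *ᵥ (B *ᵥ v))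
        = (B *ᵥ v) ⬝ᵥ (Aᵀ *ᵥ (A *ᵥ (B *ᵥ v))) := by rw [mulVec_mulVec (B *ᵥ v) Aᵀ A]
      _ = (A *ᵥ (B *ᵥ v)) ⬝ᵥ (A *ᵥ (B *ᵥ v)) := (dp_mulVec_left' _ _ _).symm
      _ = ((A * B) *ᵥ v) ⬝ᵥ ((A * B) *ᵥ v) := by rw [mulVec_mulVec v A B]
  have hABAB : (A * B) * (A * B) = A * B := by
    rw [Matrix.mul_assoc A B (A * B), ← Matrix.mul_assoc B A B, h2]
  have hqq : ((A * B) *ᵥ v) ⬝ᵥ ((A * B) *ᵥ v) = v ⬝ᵥ ((A * B) *ᵥ v) := by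
    calc ((A * B) *ᵥ v) ⬝ᵥ ((A * B) *ᵥ v)
        = v ⬝ᵥ ((A * B)ᵀ *ᵥ ((A * B) *ᵥ v)) := dp_mulVec_left' _ _ _
      _ = v ⬝ᵥ ((A * B) *ᵥ ((A * B) *ᵥ v)) := by rw [h3]
      _ = v ⬝ᵥ (((A * B) * (A * B)) *ᵥ v) := by rw [mulVec_mulVec]
      _ = v ⬝ᵥ ((A * B) *ᵥ v) := by rw [hABAB]
  have hcs := Finset.sum_mul_sq_le_sq_mul_sq Finset.univ v ((A * B) *ᵥ v)
  have hdp : (v ⬝ᵥ ((A * B) *ᵥ v)) ^ 2 ≤ (v ⬝ᵥ v) * (((A * B) *ᵥ v) ⬝ᵥ ((A * B) *ᵥ v)) := by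
    simpa [dotProduct, sq] using hcs
  have hqv : ((A * B) *ᵥ v) ⬝ᵥ ((A * B) *ᵥ v) ≤ v ⬝ᵥ v := by
    by_cases h0 : ((A * B) *ᵥ v) ⬝ᵥ ((A * B) *ᵥ v) = 0
    · rw [h0]; exact hselfnn v
    · have hpos' : 0 < ((A * B) *ᵥ v) ⬝ᵥ ((A * B) *ᵥ v) :=
        lt_of_le_of_ne (hselfnn _) (Ne.symm h0)
      nlinarith [hqq, hdp]
  calc lam * ((B *ᵥ v) ⬝ᵥ (B *ᵥ v)) ≤ (B *ᵥ v) ⬝ᵥ ((Aᵀ * A) *ᵥ (B *ᵥ v)) := hkey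
    _ = ((A * B) *ᵥ v) ⬝ᵥ ((A * B) *ᵥ v) := hq1
    _ ≤ v ⬝ᵥ v := hqv

lemma pinv_col_sqrt_bound' {p n : ℕ} (A : Matrix (Fin p) (Fin n) ℝ) (B : Matrix (Fin n) (Fin p) ℝ)
    (h1 : A * B * A = A) (h2 : B * A * B = B) (h3 : (A * B)ᵀ = A * B) (h4 : (B * A)ᵀ = B * A)
    (lam : ℝ) (hpos : 0 < lam)
    (hmin : ∀ c : ℝ, 0 < c → (∃ v : Fin n → ℝ, v ≠ 0 ∧ (Aᵀ * A) *ᵥ v = c • v) → lam ≤ c)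
    (v : Fin p → ℝ) :
    lam * Real.sqrt ((B *ᵥ v) ⬝ᵥ (B *ᵥ v))
      ≤ Real.sqrt ((Aᵀ *ᵥ v) ⬝ᵥ (Aᵀ *ᵥ v)) := by
  classical
  have hselfnn : ∀ {q : ℕ} (x : Fin q → ℝ), 0 ≤ x ⬝ᵥ x :=
    fun x => Finset.sum_nonneg fun i _ => mul_self_nonneg _
  have hAAB : Aᵀ * A * B = Aᵀ := by
    calc Aᵀ * A * B = Aᵀ * (A * B) := Matrix.mul_assoc _ _ _
      _ = Aᵀ * (A * B)ᵀ := by rw [h3]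
      _ = ((A * B) * A)ᵀ := (transpose_mul _ _).symm
      _ = Aᵀ := by rw [h1]
  have hkey := pinv_setup' A B h1 h2 h3 h4 lam hpos hmin v
  have hr : (Aᵀ * A) *ᵥ (B *ᵥ v) = Aᵀ *ᵥ v := by
    rw [mulVec_mulVec v (Aᵀ * A) B, hAAB]
  rw [hr] at hkey
  -- Cauchy-Schwarz
  have hcs := Finset.sum_mul_sq_le_sq_mul_sq Finset.univ (B *ᵥ v) (Aᵀ *ᵥ v)
  have hdp : ((B *ᵥ v) ⬝ᵥ (Aᵀ *ᵥ v)) ^ 2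
      ≤ ((B *ᵥ v) ⬝ᵥ (B *ᵥ v)) * ((Aᵀ *ᵥ v) ⬝ᵥ (Aᵀ *ᵥ v)) := by
    simpa [dotProduct, sq] using hcs
  set s : ℝ := Real.sqrt ((B *ᵥ v) ⬝ᵥ (B *ᵥ v)) with hs
  set t : ℝ := Real.sqrt ((Aᵀ *ᵥ v) ⬝ᵥ (Aᵀ *ᵥ v)) with ht
  have hs2 : s ^ 2 = (B *ᵥ v) ⬝ᵥ (B *ᵥ v) := Real.sq_sqrt (hselfnn _)
  have ht2 : t ^ 2 = (Aᵀ *ᵥ v) ⬝ᵥ (Aᵀ *ᵥ v) := Real.sq_sqrt (hselfnn _)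
  have hsnn : 0 ≤ s := Real.sqrt_nonneg _
  have htnn : 0 ≤ t := Real.sqrt_nonneg _
  have hst : (B *ᵥ v) ⬝ᵥ (Aᵀ *ᵥ v) ≤ s * t := by
    have h0 : (B *ᵥ v) ⬝ᵥ (Aᵀ *ᵥ v) ≤ |(B *ᵥ v) ⬝ᵥ (Aᵀ *ᵥ v)| := le_abs_self _
    have h1' : |(B *ᵥ v) ⬝ᵥ (Aᵀ *ᵥ v)| ≤ s * t := by
      rw [← Real.sqrt_sq_eq_abs, hs, ht, ← Real.sqrt_mul (hselfnn _)]
      exact Real.sqrt_le_sqrt hdp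
    linarith
  have hfin : lam * s ^ 2 ≤ s * t := by
    calc lam * s ^ 2 = lam * ((B *ᵥ v) ⬝ᵥ (B *ᵥ v)) := by rw [hs2]
      _ ≤ (B *ᵥ v) ⬝ᵥ (Aᵀ *ᵥ v) := hkey
      _ ≤ s * t := hst
  rcases eq_or_lt_of_le hsnn with h0 | h0
  · rw [← h0, mul_zero]; exact htnn
  · nlinarith

/-- Proposition: bounds on inverse scaling factors.
For the incidence matrix `D` of a connected graph with algebraic connectivity `lam`
(the smallest positive eigenvalue of the Laplacian `L = Dᵀ D`), the maximum column
ℓ2-norm `μ` of `D†` satisfies `μ ≤ min (√2 / lam) (1 / √lam)`, and the maximum row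
ℓ2-norm `μ'` of `D†` satisfies `μ' ≤ 1 / √lam`. -/
theorem inverse_scaling_factor_bounds {E m : ℕ}
    (D : Matrix (Fin E) (Fin m) ℝ)
    (hD : IsIncidenceMatrix D) (hconn : (incidenceGraph D).Connected)
    (Ddag : Matrix (Fin m) (Fin E) ℝ) (hMP : IsMoorePenrose D Ddag)
    (lam : ℝ) (hlam : IsSmallestPosEigenvalue (Dᵀ * D) lam) :
    (⨆ j : Fin E, Real.sqrt (∑ i : Fin m, (Ddag i j) ^ 2))
        ≤ min (Real.sqrt 2 / lam) (1 / Real.sqrt lam) ∧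
    (⨆ i : Fin m, Real.sqrt (∑ j : Fin E, (Ddag i j) ^ 2)) ≤ 1 / Real.sqrt lam := by
  classical
  obtain ⟨h1, h2, h3, h4⟩ := hMP
  obtain ⟨hpos, -, hmin⟩ := hlam
  have hselfnn : ∀ {q : ℕ} (x : Fin q → ℝ), 0 ≤ x ⬝ᵥ x :=
    fun x => Finset.sum_nonneg fun i _ => mul_self_nonneg _
  have hsl : 0 < Real.sqrt lam := Real.sqrt_pos.mpr hpos
  have hcol : ∀ j : Fin E, Real.sqrt (∑ i : Fin m, (Ddag i j) ^ 2)
      ≤ min (Real.sqrt 2 / lam) (1 / Real.sqrt lam) := by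
    intro j
    have hwsum : ∑ i : Fin m, (Ddag i j) ^ 2
        = (Ddag *ᵥ Pi.single j 1) ⬝ᵥ (Ddag *ᵥ Pi.single j 1) := by
      simp [dotProduct, mulVec_single, sq]
    have hvv : (Pi.single j 1 : Fin E → ℝ) ⬝ᵥ Pi.single j 1 = 1 := by
      rw [dotProduct_single, Pi.single_eq_same, mul_one]
    refine le_min ?_ ?_
    · have hb := pinv_col_sqrt_bound' D Ddag h1 h2 h3 h4 lam hpos hmin (Pi.single j 1)
      have hrr : (Dᵀ *ᵥ Pi.single j 1) ⬝ᵥ (Dᵀ *ᵥ Pi.single j 1) = 2 := by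
        obtain ⟨a, b, hab, ha, hb', h0⟩ := hD j
        have hsum : (Dᵀ *ᵥ Pi.single j 1) ⬝ᵥ (Dᵀ *ᵥ Pi.single j 1)
            = ∑ i : Fin m, D j i * D j i := by
          simp [dotProduct, mulVec_single, transpose_apply]
        rw [hsum, ← Finset.sum_subset (Finset.subset_univ ({a, b} : Finset (Fin m)))
          (fun x _ hx => by
            have hxa : x ≠ a := fun h => hx (by simp [h])
            have hxb : x ≠ b := fun h => hx (by simp [h])
            rw [h0 x hxa hxb, mul_zero]),
          Finset.sum_pair hab, ha, hb']
        norm_num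
      rw [hrr] at hb
      rw [hwsum, le_div_iff₀ hpos]
      linarith
    · have hb := pinv_norm_bound' D Ddag h1 h2 h3 h4 lam hpos hmin (Pi.single j 1)
      rw [hvv] at hb
      rw [hwsum]
      have hle : (Ddag *ᵥ Pi.single j 1) ⬝ᵥ (Ddag *ᵥ Pi.single j 1) ≤ 1 / lam := by
        rw [le_div_iff₀ hpos]; linarith
      calc Real.sqrt ((Ddag *ᵥ Pi.single j 1) ⬝ᵥ (Ddag *ᵥ Pi.single j 1))
          ≤ Real.sqrt (1 / lam) := Real.sqrt_le_sqrt hle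
        _ = 1 / Real.sqrt lam := by rw [one_div, Real.sqrt_inv, one_div]
  constructor
  · rcases isEmpty_or_nonempty (Fin E) with hE | hE
    · rw [Real.iSup_of_isEmpty]
      exact le_min (by positivity) (by positivity)
    · exact ciSup_le hcol
  · haveI : Nonempty (Fin m) := hconn.nonempty
    have h1' : Dᵀ * Ddagᵀ * Dᵀ = Dᵀ := by
      have h := congrArg Matrix.transpose h1
      rwa [transpose_mul, transpose_mul, ← Matrix.mul_assoc] at h
    have h2' : Ddagᵀ * Dᵀ * Ddagᵀ = Ddagᵀ := by
      have h := congrArg Matrix.transpose h2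
      rwa [transpose_mul, transpose_mul, ← Matrix.mul_assoc] at h
    have h3' : (Dᵀ * Ddagᵀ)ᵀ = Dᵀ * Ddagᵀ := by
      rw [← transpose_mul, transpose_transpose]
      exact h4.symm
    have h4' : (Ddagᵀ * Dᵀ)ᵀ = Ddagᵀ * Dᵀ := by
      rw [← transpose_mul, transpose_transpose]
      exact h3.symm
    have hmin' : ∀ c : ℝ, 0 < c →
        (∃ u : Fin E → ℝ, u ≠ 0 ∧ ((Dᵀ)ᵀ * Dᵀ) *ᵥ u = c • u) → lam ≤ c := by
      rintro c hc ⟨u, hu0, huc⟩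
      rw [transpose_transpose] at huc
      have hDu : (Dᵀ * D) *ᵥ (Dᵀ *ᵥ u) = c • (Dᵀ *ᵥ u) := by
        rw [mulVec_mulVec u (Dᵀ * D) Dᵀ, Matrix.mul_assoc, ← mulVec_mulVec u Dᵀ (D * Dᵀ), huc,
          mulVec_smul]
      have hune : Dᵀ *ᵥ u ≠ 0 := by
        intro h0
        apply hu0
        have hz : (D * Dᵀ) *ᵥ u = 0 := by
          rw [← mulVec_mulVec u D Dᵀ, h0, mulVec_zero]
        rw [huc] at hz
        exact (smul_eq_zero.mp hz).resolve_left (ne_of_gt hc)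
      exact hmin c hc ⟨Dᵀ *ᵥ u, hune, hDu⟩
    refine ciSup_le fun i => ?_
    have hb := pinv_norm_bound' Dᵀ Ddagᵀ h1' h2' h3' h4' lam hpos hmin' (Pi.single i 1)
    have hvv : (Pi.single i 1 : Fin m → ℝ) ⬝ᵥ Pi.single i 1 = 1 := by
      rw [dotProduct_single, Pi.single_eq_same, mul_one]
    rw [hvv] at hb
    have hwsum : ∑ j : Fin E, (Ddag i j) ^ 2
        = (Ddagᵀ *ᵥ Pi.single i 1) ⬝ᵥ (Ddagᵀ *ᵥ Pi.single i 1) := by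
      simp [dotProduct, mulVec_single, transpose_apply, sq]
    rw [hwsum]
    have hle : (Ddagᵀ *ᵥ Pi.single i 1) ⬝ᵥ (Ddagᵀ *ᵥ Pi.single i 1) ≤ 1 / lam := by
      rw [le_div_iff₀ hpos]; linarith
    calc Real.sqrt ((Ddagᵀ *ᵥ Pi.single i 1) ⬝ᵥ (Ddagᵀ *ᵥ Pi.single i 1))
        ≤ Real.sqrt (1 / lam) := Real.sqrt_le_sqrt hle
      _ = 1 / Real.sqrt lam := by rw [one_div, Real.sqrt_inv, one_div]
end

section
/- Let D ∈ {−1,0,1}^{|ℰ|×m} be the incidence matrix of a graph G = ([m], ℰ) with maximal vertex degree Δ_deg, let d ≥ 1, and set D̃ = D ⊗ I_{d²}. Fix a nonempty set 𝒯 ⊆ [|ℰ|d²] and let 𝒯_ℰ ⊆ [|ℰ|] be the set of edges j such that some index i ∈ 𝒯 satisfies (j−1)d² + 1 ≤ i ≤ j d². Then for every θ ∈ ℝ^{md²}, the ℓ1 norm of the restriction of D̃θ to 𝒯 satisfies ‖(D̃θ)_𝒯‖₁ ≤ 2 √|𝒯| · min{√Δ_deg, √|𝒯_ℰ|} · ‖θ‖₂;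 equivalently, the compatibility factor satisfies κ_𝒯 ≥ 1 / (2 min{√Δ_deg, √|𝒯_ℰ|}). -/
open Matrix Finset
open scoped Kronecker

/-- The compatibility factor of `Dt` for an index set `T`:
`κ_T = inf { √|T| ‖θ‖₂ / ‖(Dt θ)_T‖₁ }` over `θ` with `(Dt θ)_T ≠ 0`, and `κ_∅ = 1`. -/
noncomputable def compatFactor {E m n : ℕ}
    (Dt : Matrix (Fin E × Fin n) (Fin m × Fin n) ℝ)
    (T : Finset (Fin E × Fin n)) : ℝ :=
  if T = ∅ then 1
  else sInf {r : ℝ | ∃ θ : Fin m × Fin n → ℝ,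
    (∑ p ∈ T, |(Dt *ᵥ θ) p|) ≠ 0 ∧
    r = Real.sqrt T.card * Real.sqrt (∑ q, θ q ^ 2) / (∑ p ∈ T, |(Dt *ᵥ θ) p|)}

set_option maxHeartbeats 1000000 in
/-- Proposition: bounds on the compatibility factor.
If `D` is the incidence matrix of a graph with maximal degree `Δdeg`, `Dt = D ⊗ I_{d²}`,
and `T ⊆ [|ℰ|d²]` is nonempty with `T_ℰ` the set of edges appearing in `T`, then for all
`θ`, `‖(Dt θ)_T‖₁ ≤ 2 √|T| · min(√Δdeg, √|T_ℰ|) · ‖θ‖₂`; equivalently,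
`κ_T ≥ 1 / (2 min(√Δdeg, √|T_ℰ|))`. -/
theorem compatibility_factor_bound {E m : ℕ} (d : ℕ) (hd : 1 ≤ d)
    (D : Matrix (Fin E) (Fin m) ℝ) (hD : IsIncidenceMatrix D)
    (Δdeg : ℕ)
    (hdeg : ∀ i : Fin m, (Finset.univ.filter fun j : Fin E => D j i ≠ 0).card ≤ Δdeg)
    (Dt : Matrix (Fin E × Fin (d ^ 2)) (Fin m × Fin (d ^ 2)) ℝ)
    (hDt : Dt = D ⊗ₖ (1 : Matrix (Fin (d ^ 2)) (Fin (d ^ 2)) ℝ))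
    (T : Finset (Fin E × Fin (d ^ 2))) (hT : T.Nonempty) :
    (∀ θ : Fin m × Fin (d ^ 2) → ℝ,
      (∑ p ∈ T, |(Dt *ᵥ θ) p|)
        ≤ 2 * Real.sqrt T.card
            * min (Real.sqrt Δdeg) (Real.sqrt ((T.image Prod.fst).card))
            * Real.sqrt (∑ q, θ q ^ 2)) ∧
    1 / (2 * min (Real.sqrt Δdeg) (Real.sqrt ((T.image Prod.fst).card)))
      ≤ compatFactor Dt T := by
  classical
  choose a b hab hDa hDb hD0 using hD
  -- description of the set of nonzero entries of row `j`
  have hfilter : ∀ j : Fin E, (Finset.univ.filter fun i : Fin m => D j i ≠ 0)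
      = {a j, b j} := by
    intro j
    ext i
    simp only [Finset.mem_filter, Finset.mem_univ, true_and, Finset.mem_insert,
      Finset.mem_singleton]
    constructor
    · intro h
      by_contra hc
      push_neg at hc
      exact h (hD0 j i hc.1 hc.2)
    · rintro (rfl | rfl)
      · rw [hDa]; norm_num
      · rw [hDb]; norm_num
  -- explicit formula for the matrix-vector product
  have hmv : ∀ (θ : Fin m × Fin (d ^ 2) → ℝ) (p : Fin E × Fin (d ^ 2)),
      (Dt *ᵥ θ) p = θ (a p.1, p.2) - θ (b p.1, p.2) := by
    intro θ ⟨j, k⟩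
    rw [hDt]
    simp only [Matrix.mulVec, dotProduct, Matrix.kroneckerMap_apply,
      Matrix.one_apply]
    rw [Fintype.sum_prod_type]
    have h1 : ∀ i : Fin m, (∑ l, D j i * (if k = l then (1:ℝ) else 0) * θ (i, l))
        = D j i * θ (i, k) := by
      intro i
      rw [Finset.sum_congr rfl (fun l _ => by rw [mul_ite, mul_one, mul_zero, ite_mul,
        zero_mul])]
      simp
    rw [Finset.sum_congr rfl (fun i _ => h1 i)]
    have hsum : (∑ i : Fin m, D j i * θ (i, k))
        = ∑ i ∈ Finset.univ.filter (fun i : Fin m => D j i ≠ 0), D j i * θ (i, k) := by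
      refine (Finset.sum_filter_of_ne ?_).symm
      intro i _ h h0
      rw [h0, zero_mul] at h
      exact h rfl
    rw [hsum, hfilter j, Finset.sum_pair (hab j), hDa, hDb]
    ring
  set TE := T.image Prod.fst with hTE
  set M := min (Real.sqrt Δdeg) (Real.sqrt TE.card) with hM
  set A := min (Δdeg : ℝ) (TE.card : ℝ) with hAdef
  have hA : (0:ℝ) ≤ A := le_min (by positivity) (by positivity)
  have hMsq : M ^ 2 = A := by
    rcases le_total (Δdeg : ℝ) (TE.card : ℝ) with h | h
    · rw [hM, hAdef, min_eq_left (Real.sqrt_le_sqrt h), min_eq_left h,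
        Real.sq_sqrt (by positivity)]
    · rw [hM, hAdef, min_eq_right (Real.sqrt_le_sqrt h), min_eq_right h,
        Real.sq_sqrt (by positivity)]
  have hM0 : 0 ≤ M := le_min (Real.sqrt_nonneg _) (Real.sqrt_nonneg _)
  -- the main inequality
  have key : ∀ θ : Fin m × Fin (d ^ 2) → ℝ,
      (∑ p ∈ T, |(Dt *ᵥ θ) p|)
        ≤ 2 * Real.sqrt T.card
            * min (Real.sqrt Δdeg) (Real.sqrt ((T.image Prod.fst).card))
            * Real.sqrt (∑ q, θ q ^ 2) := by
    intro θ
    set N := ∑ q, θ q ^ 2 with hN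
    have hN0 : 0 ≤ N := Finset.sum_nonneg fun q _ => sq_nonneg _
    set S : Fin m → ℝ := fun i => ∑ k, θ (i, k) ^ 2 with hS
    have hS0 : ∀ i, 0 ≤ S i := fun i => Finset.sum_nonneg fun k _ => sq_nonneg _
    have hSN : ∑ i, S i = N := by rw [hN, Fintype.sum_prod_type]
    have hpair : ∀ j : Fin E, S (a j) + S (b j) ≤ N := by
      intro j
      rw [← hSN, ← Finset.sum_pair (hab j)]
      exact Finset.sum_le_sum_of_subset_of_nonneg (Finset.subset_univ _)
        (fun i _ _ => hS0 i)
    have hTsub : T ⊆ TE ×ˢ Finset.univ := by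
      intro p hp
      rw [Finset.mem_product]
      exact ⟨Finset.mem_image_of_mem _ hp, Finset.mem_univ _⟩
    have step3 : ∑ p ∈ T, (θ (a p.1, p.2) ^ 2 + θ (b p.1, p.2) ^ 2)
        ≤ ∑ j ∈ TE, (S (a j) + S (b j)) := by
      calc ∑ p ∈ T, (θ (a p.1, p.2) ^ 2 + θ (b p.1, p.2) ^ 2)
          ≤ ∑ p ∈ TE ×ˢ Finset.univ, (θ (a p.1, p.2) ^ 2 + θ (b p.1, p.2) ^ 2) :=
            Finset.sum_le_sum_of_subset_of_nonneg hTsub (fun p _ _ => by positivity)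
        _ = ∑ j ∈ TE, (S (a j) + S (b j)) := by
            rw [Finset.sum_product]
            exact Finset.sum_congr rfl fun j _ => by rw [Finset.sum_add_distrib]
    have boundTE : ∑ j ∈ TE, (S (a j) + S (b j)) ≤ (TE.card : ℝ) * N := by
      calc ∑ j ∈ TE, (S (a j) + S (b j)) ≤ ∑ _j ∈ TE, N :=
            Finset.sum_le_sum fun j _ => hpair j
        _ = (TE.card : ℝ) * N := by rw [Finset.sum_const, nsmul_eq_mul]
    have boundDeg : ∑ j ∈ TE, (S (a j) + S (b j)) ≤ (Δdeg : ℝ) * N := by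
      have h1 : ∑ j ∈ TE, (S (a j) + S (b j)) ≤ ∑ j, (S (a j) + S (b j)) :=
        Finset.sum_le_sum_of_subset_of_nonneg (Finset.subset_univ _)
          (fun j _ _ => by positivity)
      have h2 : ∑ j, (S (a j) + S (b j))
          = ∑ j : Fin E, ∑ i ∈ Finset.univ.filter fun i : Fin m => D j i ≠ 0, S i :=
        Finset.sum_congr rfl fun j _ => by
          rw [hfilter j, Finset.sum_pair (hab j)]
      have h3 : (∑ j : Fin E, ∑ i ∈ Finset.univ.filter fun i : Fin m => D j i ≠ 0, S i)
          = ∑ i : Fin m,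
              ((Finset.univ.filter fun j : Fin E => D j i ≠ 0).card : ℝ) * S i := by
        simp_rw [Finset.sum_filter]
        rw [Finset.sum_comm]
        refine Finset.sum_congr rfl fun i _ => ?_
        rw [← Finset.sum_filter, Finset.sum_const, nsmul_eq_mul]
      have h4 : (∑ i : Fin m,
            ((Finset.univ.filter fun j : Fin E => D j i ≠ 0).card : ℝ) * S i)
          ≤ (Δdeg : ℝ) * N := by
        rw [← hSN, Finset.mul_sum]
        refine Finset.sum_le_sum fun i _ => ?_
        exact mul_le_mul_of_nonneg_right (by exact_mod_cast hdeg i) (hS0 i)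
      calc ∑ j ∈ TE, (S (a j) + S (b j)) ≤ _ := h1
        _ = _ := h2
        _ = _ := h3
        _ ≤ _ := h4
    have sqBound : ∑ p ∈ T, (Dt *ᵥ θ) p ^ 2 ≤ 2 * A * N := by
      have h5 : ∑ p ∈ T, (Dt *ᵥ θ) p ^ 2
          ≤ 2 * ∑ p ∈ T, (θ (a p.1, p.2) ^ 2 + θ (b p.1, p.2) ^ 2) := by
        rw [Finset.mul_sum]
        refine Finset.sum_le_sum fun p _ => ?_
        rw [hmv θ p]
        nlinarith [sq_nonneg (θ (a p.1, p.2) + θ (b p.1, p.2))]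
      have h6 : ∑ p ∈ T, (θ (a p.1, p.2) ^ 2 + θ (b p.1, p.2) ^ 2) ≤ A * N := by
        rw [hAdef, min_mul_of_nonneg _ _ hN0]
        exact le_min (step3.trans boundDeg) (step3.trans boundTE)
      nlinarith
    -- Cauchy–Schwarz and conclusion
    set L := ∑ p ∈ T, |(Dt *ᵥ θ) p| with hL
    have hL0 : 0 ≤ L := Finset.sum_nonneg fun p _ => abs_nonneg _
    have hCS : L ^ 2 ≤ (T.card : ℝ) * ∑ p ∈ T, (Dt *ᵥ θ) p ^ 2 := by
      have h : (∑ p ∈ T, |(Dt *ᵥ θ) p|) ^ 2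
          ≤ (T.card : ℝ) * ∑ p ∈ T, |(Dt *ᵥ θ) p| ^ 2 := sq_sum_le_card_mul_sum_sq
      simpa [sq_abs] using h
    have hRHS : (2 * Real.sqrt T.card * M * Real.sqrt N) ^ 2
        = 4 * (T.card : ℝ) * A * N := by
      have h7 : Real.sqrt (T.card : ℝ) ^ 2 = (T.card : ℝ) :=
        Real.sq_sqrt (by positivity)
      have h8 : Real.sqrt N ^ 2 = N := Real.sq_sqrt hN0
      have h9 : (2 * Real.sqrt T.card * M * Real.sqrt N) ^ 2
          = 4 * (Real.sqrt T.card ^ 2) * (M ^ 2) * (Real.sqrt N ^ 2) := by ring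
      rw [h9, h7, h8, hMsq]
    have hsq : L ^ 2 ≤ (2 * Real.sqrt T.card * M * Real.sqrt N) ^ 2 := by
      rw [hRHS]
      have hc0 : (0:ℝ) ≤ (T.card : ℝ) := by positivity
      nlinarith [hCS, sqBound, hc0, hA, hN0,
        mul_le_mul_of_nonneg_left sqBound hc0]
    have hRHS0 : 0 ≤ 2 * Real.sqrt T.card * M * Real.sqrt N :=
      mul_nonneg (mul_nonneg (mul_nonneg (by norm_num) (Real.sqrt_nonneg _)) hM0)
        (Real.sqrt_nonneg _)
    calc L = Real.sqrt (L ^ 2) := (Real.sqrt_sq hL0).symm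
      _ ≤ Real.sqrt ((2 * Real.sqrt T.card * M * Real.sqrt N) ^ 2) :=
          Real.sqrt_le_sqrt hsq
      _ = 2 * Real.sqrt T.card * M * Real.sqrt N := Real.sqrt_sq hRHS0
  refine ⟨key, ?_⟩
  -- positivity of M
  obtain ⟨p0, hp0⟩ := hT
  have hdegpos : 0 < Δdeg := by
    have : a p0.1 ∈ Finset.univ.filter fun i : Fin m => D p0.1 i ≠ 0 := by
      rw [hfilter]; simp
    have h1 : 0 < (Finset.univ.filter fun j : Fin E => D j (a p0.1) ≠ 0).card := by
      refine Finset.card_pos.mpr ⟨p0.1, ?_⟩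
      simp only [Finset.mem_filter, Finset.mem_univ, true_and]
      rw [hDa]; norm_num
    exact lt_of_lt_of_le h1 (hdeg _)
  have hTEpos : 0 < TE.card :=
    Finset.card_pos.mpr ⟨p0.1, Finset.mem_image_of_mem _ hp0⟩
  have hMpos : 0 < M :=
    lt_min (Real.sqrt_pos.mpr (by exact_mod_cast hdegpos))
      (Real.sqrt_pos.mpr (by exact_mod_cast hTEpos))
  -- unfold compatFactor
  have hTne : T ≠ ∅ := Finset.nonempty_iff_ne_empty.mp ⟨p0, hp0⟩
  rw [compatFactor, if_neg hTne]
  -- the infimum set is nonempty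
  have hSne : {r : ℝ | ∃ θ : Fin m × Fin (d ^ 2) → ℝ,
      (∑ p ∈ T, |(Dt *ᵥ θ) p|) ≠ 0 ∧
      r = Real.sqrt T.card * Real.sqrt (∑ q, θ q ^ 2) /
        (∑ p ∈ T, |(Dt *ᵥ θ) p|)}.Nonempty := by
    set θ0 : Fin m × Fin (d ^ 2) → ℝ := fun q => if q = (a p0.1, p0.2) then 1 else 0
      with hθ0
    have hval : (Dt *ᵥ θ0) p0 = 1 := by
      rw [hmv θ0 p0, hθ0]
      have hne : (b p0.1, p0.2) ≠ (a p0.1, p0.2) := by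
        intro h
        exact hab p0.1 (congrArg Prod.fst h).symm
      simp [hne]
    have hLpos : 0 < ∑ p ∈ T, |(Dt *ᵥ θ0) p| := by
      have h1 : |(Dt *ᵥ θ0) p0| ≤ ∑ p ∈ T, |(Dt *ᵥ θ0) p| :=
        Finset.single_le_sum (f := fun p => |(Dt *ᵥ θ0) p|)
          (fun p _ => abs_nonneg _) hp0
      rw [hval, abs_one] at h1
      linarith
    exact ⟨_, θ0, ne_of_gt hLpos, rfl⟩
  refine le_csInf hSne ?_
  rintro r ⟨θ, hLne, rfl⟩
  set L := ∑ p ∈ T, |(Dt *ᵥ θ) p| with hLdef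
  have hL0 : 0 ≤ L := Finset.sum_nonneg fun p _ => abs_nonneg _
  have hLpos : 0 < L := lt_of_le_of_ne hL0 (Ne.symm hLne)
  have hkey := key θ
  rw [div_le_div_iff₀ (by positivity) hLpos]
  calc 1 * L = L := one_mul L
    _ ≤ 2 * Real.sqrt T.card * M * Real.sqrt (∑ q, θ q ^ 2) := hkey
    _ = Real.sqrt T.card * Real.sqrt (∑ q, θ q ^ 2) * (2 * M) := by ring
end

section
/- Let D ∈ {−1,0,1}^{|ℰ|×m} be the incidence matrix of a connected graph, d ≥ 1, D̃ = D ⊗ I_{d²}, and let Q ∈ ℝ^{N×md²}, η ∈ ℝ^N, a* ∈ ℝ^{md²}, and x̃ = Q a* + η. Let Π̃ denote the orthogonal projector onto the null space of D̃, and let D† be the Moore–Penrose pseudoinverse of D. Fix λ > 0 and suppose ‖Π̃ Qᵀ η‖₂ ≤ mλ/2 and ‖((D†)ᵀ ⊗ I_{d²}) Qᵀ η‖_∞ ≤ mλ/2. Let â be any minimizer over a ∈ ℝ^{md²} of (1/2m)‖x̃ − Qa‖₂² + λ‖D̃a‖₁. Then for every S ⊆ [|ℰ|d²]: (1/m)‖Q(â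 − a*)‖₂² ≤ λ‖â − a*‖₂ + 3λ‖(D̃(â − a*))_S‖₁ + 4λ‖(D̃a*)_{S^c}‖₁ − λ‖(D̃(â − a*))_{S^c}‖₁; in particular, â − a* lies in the cone C_S = {h : ‖(D̃h)_{S^c}‖₁ ≤ ‖h‖₂ + 3‖(D̃h)_S‖₁ + 4‖(D̃a*)_{S^c}‖₁}. -/
open Matrix Finset
open scoped Kronecker

/-! Comparing the objective at `â` and at `a*` gives, for `h = â - a*`, the basic inequality
`(1/2m)‖Qh‖² ≤ (1/m)⟨Qᵀη, h⟩ + λ(‖D̃a*‖₁ - ‖D̃â‖₁)`. Since `D† ⊗ I` is a pseudoinverse of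
`D̃ = D ⊗ I`, the projector is `Π̃ = 1 - (D† ⊗ I) D̃`, so the noise term splits as
`⟨Π̃Qᵀη, h⟩ + ⟨(D†ᵀ ⊗ I)Qᵀη, D̃h⟩`; Cauchy–Schwarz and Hölder bound the two parts by
`(mλ/2)(‖h‖₂ + ‖D̃h‖₁)`. Splitting `‖D̃a*‖₁ - ‖D̃â‖₁` along `S` and `Sᶜ` with the triangle
inequality produces the constants `3` and `4`, and the cone condition is the basic inequality
read with its nonnegative left-hand side dropped. -/

lemma IsMoorePenrose.kronecker {α β γ δ : Type*} [Fintype α] [Fintype β] [Fintype γ] [Fintype δ]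
    {A : Matrix α β ℝ} {B : Matrix β α ℝ} {C : Matrix γ δ ℝ} {F : Matrix δ γ ℝ}
    (hAB : IsMoorePenrose A B) (hCF : IsMoorePenrose C F) :
    IsMoorePenrose (A ⊗ₖ C) (B ⊗ₖ F) := by
  obtain ⟨hABA, hBAB, hAB_symm, hBA_symm⟩ := hAB
  obtain ⟨hCFC, hFCF, hCF_symm, hFC_symm⟩ := hCF
  refine ⟨?_, ?_, ?_, ?_⟩ <;>
    simp only [← mul_kronecker_mul, ← kroneckerMap_transpose, *]

lemma isMoorePenrose_one {α : Type*} [Fintype α] [DecidableEq α] :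
    IsMoorePenrose (1 : Matrix α α ℝ) 1 := by
  simp [IsMoorePenrose]

lemma IsMoorePenrose.projector_ker_eq_one_sub_mul {κ ι : Type*} [Fintype κ]
    [Fintype ι] [DecidableEq ι] {A : Matrix κ ι ℝ} {B : Matrix ι κ ℝ} (hAB : IsMoorePenrose A B)
    {P : Matrix ι ι ℝ} (hPsymm : Pᵀ = P) (hPker : ∀ v, A *ᵥ (P *ᵥ v) = 0)
    (hPfix : ∀ v, A *ᵥ v = 0 → P *ᵥ v = v) :
    P = 1 - B * A := by
  have hAP : A * P = 0 :=
    ext_iff_mulVec.2 fun v => by rw [← mulVec_mulVec, hPker, zero_mulVec]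
  have hfix : P * (1 - B * A) = 1 - B * A := ext_iff_mulVec.2 fun v => by
    rw [← mulVec_mulVec]
    refine hPfix _ ?_
    rw [mulVec_mulVec, Matrix.mul_sub, Matrix.mul_one, ← Matrix.mul_assoc, hAB.1, sub_self,
      zero_mulVec]
  have hBA : (1 - B * A) * P = P := by
    rw [Matrix.sub_mul, Matrix.one_mul, Matrix.mul_assoc, hAP, Matrix.mul_zero, sub_zero]
  have := congrArg transpose hfix
  rw [transpose_mul, transpose_sub, transpose_one, hAB.2.2.2, hPsymm] at this
  exact hBA.symm.trans this

lemma dotProduct_le_mul_sum_abs {ι : Type*} [Fintype ι] {c : ℝ} {u : ι → ℝ}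
    (hu : ∀ p, |u p| ≤ c) (v : ι → ℝ) :
    u ⬝ᵥ v ≤ c * ∑ p, |v p| := by
  rw [mul_sum]
  refine sum_le_sum fun p _ => ?_
  calc u p * v p ≤ |u p| * |v p| := by rw [← abs_mul]; exact le_abs_self _
    _ ≤ c * |v p| := by gcongr; exact hu p

lemma dotProduct_eq_add_of_eq_one_sub {κ ι : Type*} [Fintype κ] [Fintype ι] [DecidableEq ι]
    {A : Matrix κ ι ℝ} {B : Matrix ι κ ℝ} {P : Matrix ι ι ℝ} (hPsymm : Pᵀ = P)
    (hP : P = 1 - B * A) (u v : ι → ℝ) :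
    u ⬝ᵥ v = (P *ᵥ u) ⬝ᵥ v + (Bᵀ *ᵥ u) ⬝ᵥ (A *ᵥ v) := by
  have hsplit : v = P *ᵥ v + B *ᵥ (A *ᵥ v) := by
    rw [hP, sub_mulVec, one_mulVec, mulVec_mulVec, sub_add_cancel]
  conv_lhs => rw [hsplit]
  rw [dotProduct_add, dotProduct_mulVec, dotProduct_mulVec, ← mulVec_transpose,
    ← mulVec_transpose, hPsymm]

lemma dotProduct_le_of_eq_one_sub {κ ι : Type*} [Fintype κ] [Fintype ι] [DecidableEq ι]
    {A : Matrix κ ι ℝ} {B : Matrix ι κ ℝ} {P : Matrix ι ι ℝ} (hPsymm : Pᵀ = P)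
    (hP : P = 1 - B * A) {u : ι → ℝ} {r s : ℝ} (hr : √(∑ q, ((P *ᵥ u) q) ^ 2) ≤ r)
    (hs : ∀ p, |(Bᵀ *ᵥ u) p| ≤ s) (v : ι → ℝ) :
    u ⬝ᵥ v ≤ r * √(∑ q, (v q) ^ 2) + s * ∑ p, |(A *ᵥ v) p| := by
  rw [dotProduct_eq_add_of_eq_one_sub hPsymm hP]
  exact add_le_add ((Real.sum_mul_le_sqrt_mul_sqrt _ _ _).trans
    (mul_le_mul_of_nonneg_right hr (Real.sqrt_nonneg _))) (dotProduct_le_mul_sum_abs hs _)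

lemma sum_abs_sub_sum_abs_add_le {ι : Type*} [Fintype ι] [DecidableEq ι] (x h : ι → ℝ)
    (S : Finset ι) :
    ∑ p, |x p| - ∑ p, |(x + h) p|
      ≤ ∑ p ∈ S, |h p| + 2 * ∑ p ∈ Sᶜ, |x p| - ∑ p ∈ Sᶜ, |h p| := by
  simp only [Pi.add_apply]
  rw [← sum_add_sum_compl S fun p => |x p|, ← sum_add_sum_compl S fun p => |x p + h p|]
  have hS : ∑ p ∈ S, (|x p| - |x p + h p|) ≤ ∑ p ∈ S, |h p| :=
    sum_le_sum fun p _ => by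
      simpa using abs_sub_abs_le_abs_sub (x p) (x p + h p)
  have hSc : ∑ p ∈ Sᶜ, (|x p| - |x p + h p|) ≤ ∑ p ∈ Sᶜ, (2 * |x p| - |h p|) :=
    sum_le_sum fun p _ => by
      have := abs_sub (x p + h p) (x p)
      rw [add_sub_cancel_left] at this
      linarith
  simp only [sum_sub_distrib, ← mul_sum] at hS hSc
  linarith

lemma leastSquares_basic_inequality {n ι : Type*} [Fintype n] [Fintype ι] {Q : Matrix n ι ℝ}
    {η x : n → ℝ} {astar ahat : ι → ℝ} {c penstar penhat : ℝ} (hx : x = Q *ᵥ astar + η)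
    (hmin : c * ∑ i, (x i - (Q *ᵥ ahat) i) ^ 2 + penhat
      ≤ c * ∑ i, (x i - (Q *ᵥ astar) i) ^ 2 + penstar) :
    c * ∑ i, ((Q *ᵥ (ahat - astar)) i) ^ 2
      ≤ 2 * c * ((Qᵀ *ᵥ η) ⬝ᵥ (ahat - astar)) + (penstar - penhat) := by
  subst hx
  have hres : ∀ i, (Q *ᵥ astar + η) i - (Q *ᵥ ahat) i = η i - (Q *ᵥ (ahat - astar)) i := by
    intro i
    simp only [mulVec_sub, Pi.add_apply, Pi.sub_apply]
    ring
  have hdot : (Qᵀ *ᵥ η) ⬝ᵥ (ahat - astar) = ∑ i, η i * (Q *ᵥ (ahat - astar)) i := by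
    rw [mulVec_transpose, ← dotProduct_mulVec]
    rfl
  simp only [hres] at hmin
  simp only [Pi.add_apply, add_sub_cancel_left, sub_sq, sum_add_distrib, sum_sub_distrib,
    ← mul_sum, mul_assoc] at hmin
  rw [hdot]
  linarith

theorem tv_basic_inequality_and_cone_general {E m d N : ℕ}
    (D : Matrix (Fin E) (Fin m) ℝ)
    (Dt : Matrix (Fin E × Fin (d ^ 2)) (Fin m × Fin (d ^ 2)) ℝ)
    (hDt : Dt = D ⊗ₖ (1 : Matrix (Fin (d ^ 2)) (Fin (d ^ 2)) ℝ))
    (Ddag : Matrix (Fin m) (Fin E) ℝ) (hMP : IsMoorePenrose D Ddag)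
    (Pit : Matrix (Fin m × Fin (d ^ 2)) (Fin m × Fin (d ^ 2)) ℝ)
    (hPsym : Pitᵀ = Pit)
    (hPnull : ∀ v : Fin m × Fin (d ^ 2) → ℝ, Dt *ᵥ (Pit *ᵥ v) = 0)
    (hPfix : ∀ v : Fin m × Fin (d ^ 2) → ℝ, Dt *ᵥ v = 0 → Pit *ᵥ v = v)
    (Q : Matrix (Fin N) (Fin m × Fin (d ^ 2)) ℝ)
    (η : Fin N → ℝ) (astar : Fin m × Fin (d ^ 2) → ℝ)
    (xt : Fin N → ℝ) (hxt : xt = Q *ᵥ astar + η)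
    (lam : ℝ) (hlam : 0 < lam)
    (hnoise1 : Real.sqrt (∑ p, ((Pit *ᵥ (Qᵀ *ᵥ η)) p) ^ 2) ≤ (m : ℝ) * lam / 2)
    (hnoise2 : ∀ p : Fin E × Fin (d ^ 2),
      |(((Ddagᵀ ⊗ₖ (1 : Matrix (Fin (d ^ 2)) (Fin (d ^ 2)) ℝ)) *ᵥ (Qᵀ *ᵥ η)) p)|
        ≤ (m : ℝ) * lam / 2)
    (ahat : Fin m × Fin (d ^ 2) → ℝ)
    (hmin : ∀ a : Fin m × Fin (d ^ 2) → ℝ,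
      (1 / (2 * (m : ℝ))) * ∑ i, (xt i - (Q *ᵥ ahat) i) ^ 2
          + lam * ∑ p, |(Dt *ᵥ ahat) p|
        ≤ (1 / (2 * (m : ℝ))) * ∑ i, (xt i - (Q *ᵥ a) i) ^ 2
          + lam * ∑ p, |(Dt *ᵥ a) p|) :
    ∀ S : Finset (Fin E × Fin (d ^ 2)),
      ((1 / (m : ℝ)) * ∑ i, ((Q *ᵥ (ahat - astar)) i) ^ 2
          ≤ lam * Real.sqrt (∑ q, (ahat q - astar q) ^ 2)
            + 3 * lam * ∑ p ∈ S, |(Dt *ᵥ (ahat - astar)) p|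
            + 4 * lam * ∑ p ∈ Sᶜ, |(Dt *ᵥ astar) p|
            - lam * ∑ p ∈ Sᶜ, |(Dt *ᵥ (ahat - astar)) p|) ∧
      (∑ p ∈ Sᶜ, |(Dt *ᵥ (ahat - astar)) p|
          ≤ Real.sqrt (∑ q, (ahat q - astar q) ^ 2)
            + 3 * ∑ p ∈ S, |(Dt *ᵥ (ahat - astar)) p|
            + 4 * ∑ p ∈ Sᶜ, |(Dt *ᵥ astar) p|) := by
  intro S
  obtain rfl | hm := Nat.eq_zero_or_pos m
  · obtain rfl : astar = 0 := Subsingleton.elim _ _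
    obtain rfl : ahat = 0 := Subsingleton.elim _ _
    simp
  have hP : Pit = 1 - (Ddag ⊗ₖ 1) * Dt :=
    (hDt ▸ hMP.kronecker isMoorePenrose_one).projector_ker_eq_one_sub_mul hPsym hPnull hPfix
  rw [← transpose_one, kroneckerMap_transpose] at hnoise2
  have hcross := dotProduct_le_of_eq_one_sub hPsym hP hnoise1 hnoise2 (ahat - astar)
  simp only [Pi.sub_apply] at hcross
  have hscale : 1 / (m : ℝ) * (m * lam / 2) = lam / 2 := by field_simp
  have hcross_scaled := mul_le_mul_of_nonneg_left hcross (by positivity : (0 : ℝ) ≤ 1 / m)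
  rw [mul_add, ← mul_assoc, ← mul_assoc, hscale, ← sum_add_sum_compl S] at hcross_scaled
  have hbasic := leastSquares_basic_inequality hxt (hmin astar)
  rw [show (1 : ℝ) / (2 * m) = 1 / m / 2 by ring] at hbasic
  have hpen := sum_abs_sub_sum_abs_add_le (Dt *ᵥ astar) (Dt *ᵥ (ahat - astar)) S
  rw [← mulVec_add, add_sub_cancel] at hpen
  have hpen' := mul_le_mul_of_nonneg_left hpen hlam.le
  have hA : 0 ≤ 1 / (m : ℝ) * ∑ i, ((Q *ᵥ (ahat - astar)) i) ^ 2 := by positivity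
  refine ⟨by linarith, le_of_mul_le_mul_left ?_ hlam⟩
  linarith

/-- Basic inequality and cone membership for the TV-penalized
least squares estimator.  If `x̃ = Q a* + η`, `Π̃` is the orthogonal projector onto
the null space of `D̃ = D ⊗ I_{d²}`, the noise conditions
`‖Π̃ Qᵀ η‖₂ ≤ mλ/2` and `‖((D†)ᵀ ⊗ I_{d²}) Qᵀ η‖_∞ ≤ mλ/2` hold, and `â` minimizes
`(1/2m)‖x̃ − Qa‖₂² + λ‖D̃a‖₁`, then for every `S` the basic inequality holds and
`â − a*` lies in the cone `C_S`. -/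
theorem tv_basic_inequality_and_cone {E m d N : ℕ}
    (D : Matrix (Fin E) (Fin m) ℝ) (hD : IsIncidenceMatrix D)
    (hconn : (incidenceGraph D).Connected)
    (Dt : Matrix (Fin E × Fin (d ^ 2)) (Fin m × Fin (d ^ 2)) ℝ)
    (hDt : Dt = D ⊗ₖ (1 : Matrix (Fin (d ^ 2)) (Fin (d ^ 2)) ℝ))
    (Ddag : Matrix (Fin m) (Fin E) ℝ) (hMP : IsMoorePenrose D Ddag)
    (Pit : Matrix (Fin m × Fin (d ^ 2)) (Fin m × Fin (d ^ 2)) ℝ)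
    (hPsym : Pitᵀ = Pit) (hPidem : Pit * Pit = Pit)
    (hPnull : ∀ v : Fin m × Fin (d ^ 2) → ℝ, Dt *ᵥ (Pit *ᵥ v) = 0)
    (hPfix : ∀ v : Fin m × Fin (d ^ 2) → ℝ, Dt *ᵥ v = 0 → Pit *ᵥ v = v)
    (Q : Matrix (Fin N) (Fin m × Fin (d ^ 2)) ℝ)
    (η : Fin N → ℝ) (astar : Fin m × Fin (d ^ 2) → ℝ)
    (xt : Fin N → ℝ) (hxt : xt = Q *ᵥ astar + η)
    (lam : ℝ) (hlam : 0 < lam)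
    (hnoise1 : Real.sqrt (∑ p, ((Pit *ᵥ (Qᵀ *ᵥ η)) p) ^ 2) ≤ (m : ℝ) * lam / 2)
    (hnoise2 : ∀ p : Fin E × Fin (d ^ 2),
      |(((Ddagᵀ ⊗ₖ (1 : Matrix (Fin (d ^ 2)) (Fin (d ^ 2)) ℝ)) *ᵥ (Qᵀ *ᵥ η)) p)|
        ≤ (m : ℝ) * lam / 2)
    (ahat : Fin m × Fin (d ^ 2) → ℝ)
    (hmin : ∀ a : Fin m × Fin (d ^ 2) → ℝ,
      (1 / (2 * (m : ℝ))) * ∑ i, (xt i - (Q *ᵥ ahat) i) ^ 2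
          + lam * ∑ p, |(Dt *ᵥ ahat) p|
        ≤ (1 / (2 * (m : ℝ))) * ∑ i, (xt i - (Q *ᵥ a) i) ^ 2
          + lam * ∑ p, |(Dt *ᵥ a) p|) :
    ∀ S : Finset (Fin E × Fin (d ^ 2)),
      ((1 / (m : ℝ)) * ∑ i, ((Q *ᵥ (ahat - astar)) i) ^ 2
          ≤ lam * Real.sqrt (∑ q, (ahat q - astar q) ^ 2)
            + 3 * lam * ∑ p ∈ S, |(Dt *ᵥ (ahat - astar)) p|
            + 4 * lam * ∑ p ∈ Sᶜ, |(Dt *ᵥ astar) p|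
            - lam * ∑ p ∈ Sᶜ, |(Dt *ᵥ (ahat - astar)) p|) ∧
      (∑ p ∈ Sᶜ, |(Dt *ᵥ (ahat - astar)) p|
          ≤ Real.sqrt (∑ q, (ahat q - astar q) ^ 2)
            + 3 * ∑ p ∈ S, |(Dt *ᵥ (ahat - astar)) p|
            + 4 * ∑ p ∈ Sᶜ, |(Dt *ᵥ astar) p|) :=
  tv_basic_inequality_and_cone_general D Dt hDt Ddag hMP Pit hPsym hPnull hPfix Q η astar xt hxt lam
    hlam hnoise1 hnoise2 ahat hmin
end

section
/- Let D ∈ {−1,0,1}^{|ℰ|×m} be the incidence matrix of a connected graph, d ≥ 1, D̃ = D ⊗ I_{d²}, D̃† = D† ⊗ I_{d²} its Moore–Penrose pseudoinverse, and Π̃ the orthogonal projector onto the null space of D̃ (equal to ((1_m 1_mᵀ)/m) ⊗ I_{d²}). Fix a* ∈ ℝ^{md²}, S ⊆ [|ℰ|d²], and the cone C_S = {h : ‖(D̃h)_{S^c}‖₁ ≤ ‖h‖₂ + 3‖(D̃h)_S‖₁ + 4‖(D̃a*)_{S^c}‖₁}. Let Q ∈ ℝ^{N×md²} be arbitrary,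 U := (1_m/√m) ⊗ I_{d²}, and b_j := D̃† e_j for j ∈ [|ℰ|d²]. Then for every h ∈ C_S with ‖h‖₂ = 1, writing h₁ = D̃†D̃h and h₂ = Π̃h, one has |⟨Q h₁, Q h₂⟩| ≤ (1 + 4‖(D̃h)_S‖₁ + 4‖(D̃a*)_{S^c}‖₁) · max_{j ∈ [|ℰ|d²]} ‖Uᵀ Qᵀ Q b_j‖₂ · ‖h₂‖₂. -/
open Matrix Finset
open scoped Kronecker

lemma dot_mulVec_eq {α β : Type*} [Fintype α] [Fintype β]
    (M : Matrix α β ℝ) (x : α → ℝ) (y : β → ℝ) :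
    x ⬝ᵥ (M *ᵥ y) = (Mᵀ *ᵥ x) ⬝ᵥ y := by
  simp only [dotProduct, Matrix.mulVec, dotProduct, Matrix.transpose_apply,
    Finset.mul_sum, Finset.sum_mul]
  rw [Finset.sum_comm]
  congr 1; ext j; congr 1; ext i; ring

lemma abs_sum_le_sqrt {ι : Type*} [Fintype ι] (f g : ι → ℝ) :
    |∑ i, f i * g i| ≤ Real.sqrt (∑ i, f i ^ 2) * Real.sqrt (∑ i, g i ^ 2) := by
  rw [← Real.sqrt_sq_eq_abs, ← Real.sqrt_mul (by positivity)]
  exact Real.sqrt_le_sqrt (Finset.sum_mul_sq_le_sq_mul_sq _ _ _)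

/-- Bookkeeping inequality for the cross term.
For unit-norm `h` in the cone `C_S`, with `h₁ = D̃†D̃h`, `h₂ = Π̃h`,
`U = (1_m/√m) ⊗ I_{d²}` and `b_j = D̃† e_j`, one has
`|⟨Qh₁, Qh₂⟩| ≤ (1 + 4‖(D̃h)_S‖₁ + 4‖(D̃a*)_{Sᶜ}‖₁) · max_j ‖Uᵀ Qᵀ Q b_j‖₂ · ‖h₂‖₂`. -/
theorem cross_term_bookkeeping_inequality {E m d N : ℕ}
    (D : Matrix (Fin E) (Fin m) ℝ) (hD : IsIncidenceMatrix D)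
    (hconn : (incidenceGraph D).Connected)
    (Ddag : Matrix (Fin m) (Fin E) ℝ) (hMP : IsMoorePenrose D Ddag)
    (Dt : Matrix (Fin E × Fin (d ^ 2)) (Fin m × Fin (d ^ 2)) ℝ)
    (hDt : Dt = D ⊗ₖ (1 : Matrix (Fin (d ^ 2)) (Fin (d ^ 2)) ℝ))
    (Dtd : Matrix (Fin m × Fin (d ^ 2)) (Fin E × Fin (d ^ 2)) ℝ)
    (hDtd : Dtd = Ddag ⊗ₖ (1 : Matrix (Fin (d ^ 2)) (Fin (d ^ 2)) ℝ))
    (Pit : Matrix (Fin m × Fin (d ^ 2)) (Fin m × Fin (d ^ 2)) ℝ)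
    (hPit : Pit = Matrix.of (fun p q : Fin m × Fin (d ^ 2) =>
      if p.2 = q.2 then (1 : ℝ) / (m : ℝ) else 0))
    (U : Matrix (Fin m × Fin (d ^ 2)) (Fin (d ^ 2)) ℝ)
    (hU : U = Matrix.of (fun (p : Fin m × Fin (d ^ 2)) (q : Fin (d ^ 2)) =>
      if p.2 = q then 1 / Real.sqrt m else 0))
    (b : Fin E × Fin (d ^ 2) → Fin m × Fin (d ^ 2) → ℝ)
    (hb : ∀ j, b j = fun p => Dtd p j)
    (Q : Matrix (Fin N) (Fin m × Fin (d ^ 2)) ℝ)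
    (astar : Fin m × Fin (d ^ 2) → ℝ)
    (S : Finset (Fin E × Fin (d ^ 2)))
    (h : Fin m × Fin (d ^ 2) → ℝ)
    (hcone : ∑ p ∈ Sᶜ, |(Dt *ᵥ h) p|
        ≤ Real.sqrt (∑ q, h q ^ 2) + 3 * ∑ p ∈ S, |(Dt *ᵥ h) p|
          + 4 * ∑ p ∈ Sᶜ, |(Dt *ᵥ astar) p|)
    (hnorm : ∑ q, h q ^ 2 = 1)
    (h1 h2 : Fin m × Fin (d ^ 2) → ℝ)
    (hh1 : h1 = Dtd *ᵥ (Dt *ᵥ h)) (hh2 : h2 = Pit *ᵥ h) :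
    |(Q *ᵥ h1) ⬝ᵥ (Q *ᵥ h2)|
      ≤ (1 + 4 * ∑ p ∈ S, |(Dt *ᵥ h) p| + 4 * ∑ p ∈ Sᶜ, |(Dt *ᵥ astar) p|)
        * (⨆ j : Fin E × Fin (d ^ 2),
            Real.sqrt (∑ q, ((Uᵀ *ᵥ (Qᵀ *ᵥ (Q *ᵥ b j))) q) ^ 2))
        * Real.sqrt (∑ q, h2 q ^ 2) := by
  have hm : 0 < m := by
    obtain ⟨v⟩ := hconn.nonempty
    exact v.pos
  have hPit2 : Pit = U * Uᵀ := by
    rw [hPit, hU]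
    ext p p'
    simp only [Matrix.mul_apply, Matrix.transpose_apply, Matrix.of_apply]
    rw [Finset.sum_eq_single p.2]
    · by_cases hpq : p.2 = p'.2
      · rw [if_pos hpq, if_pos rfl, if_pos hpq.symm, div_mul_div_comm, one_mul,
          Real.mul_self_sqrt (Nat.cast_nonneg m)]
      · rw [if_neg hpq, if_neg (Ne.symm hpq), mul_zero]
    · intro q _ hq
      rw [if_neg (Ne.symm hq), zero_mul]
    · intro hq; exact absurd (Finset.mem_univ _) hq
  have hUU : Uᵀ * U = (1 : Matrix (Fin (d ^ 2)) (Fin (d ^ 2)) ℝ) := by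
    ext q q'
    simp only [Matrix.mul_apply, Matrix.transpose_apply, hU, Matrix.of_apply,
      Matrix.one_apply]
    rw [Fintype.sum_prod_type]
    by_cases hqq : q = q'
    · subst hqq
      have hinner : ∀ i : Fin m, (∑ r : Fin (d ^ 2),
          (if ((i, r) : Fin m × Fin (d ^ 2)).2 = q then 1 / Real.sqrt m else 0) *
            (if ((i, r) : Fin m × Fin (d ^ 2)).2 = q then 1 / Real.sqrt m else 0))
          = 1 / (m : ℝ) := by
        intro i
        rw [Finset.sum_eq_single q]
        · rw [if_pos rfl, div_mul_div_comm, one_mul,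
            Real.mul_self_sqrt (Nat.cast_nonneg m)]
        · intro r _ hr; rw [if_neg hr, zero_mul]
        · intro hq; exact absurd (Finset.mem_univ _) hq
      rw [Finset.sum_congr rfl (fun i _ => hinner i)]
      simp only [Finset.sum_const, Finset.card_univ, Fintype.card_fin, nsmul_eq_mul,
        mul_one_div]
      rw [div_self (by exact_mod_cast hm.ne' : (m : ℝ) ≠ 0)]
      simp
    · rw [if_neg hqq, Finset.sum_eq_zero]
      intro i _
      rw [Finset.sum_eq_zero]
      intro r _
      by_cases hr : r = q
      · rw [if_neg (show ¬((i, r) : Fin m × Fin (d ^ 2)).2 = q' from by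
            simpa [hr] using hqq), mul_zero]
      · rw [if_neg hr, zero_mul]
  set u : Fin (d ^ 2) → ℝ := Uᵀ *ᵥ h with hu
  have h2eq : h2 = U *ᵥ u := by
    rw [hh2, hPit2, hu, ← Matrix.mulVec_mulVec]
  have sq_dot : ∀ {ι : Type} [Fintype ι] (x : ι → ℝ), ∑ q, x q ^ 2 = x ⬝ᵥ x := by
    intro ι _ x; simp [dotProduct, sq]
  have hnormeq : ∑ q, h2 q ^ 2 = ∑ q, u q ^ 2 := by
    rw [sq_dot, sq_dot, h2eq, dot_mulVec_eq U (U *ᵥ u) u, Matrix.mulVec_mulVec, hUU,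
      Matrix.one_mulVec, dotProduct_comm]
  set w : Fin E × Fin (d ^ 2) → ℝ := Dt *ᵥ h with hw
  set M : ℝ := ⨆ j : Fin E × Fin (d ^ 2),
      Real.sqrt (∑ q, ((Uᵀ *ᵥ (Qᵀ *ᵥ (Q *ᵥ b j))) q) ^ 2) with hM
  set c : Fin E × Fin (d ^ 2) → Fin (d ^ 2) → ℝ :=
      fun j => Uᵀ *ᵥ (Qᵀ *ᵥ (Q *ᵥ b j)) with hc
  have hkey : (Q *ᵥ h1) ⬝ᵥ (Q *ᵥ h2) = ∑ j, w j * (c j ⬝ᵥ u) := by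
    have e1 := dot_mulVec_eq Qᵀ h1 (Q *ᵥ h2)
    rw [Matrix.transpose_transpose] at e1
    rw [← e1, hh1, dotProduct_comm, dot_mulVec_eq Dtd _ w, dotProduct_comm]
    have hterm : ∀ j, (Dtdᵀ *ᵥ (Qᵀ *ᵥ (Q *ᵥ h2))) j = c j ⬝ᵥ u := by
      intro j
      have ebj : (Dtdᵀ *ᵥ (Qᵀ *ᵥ (Q *ᵥ h2))) j = b j ⬝ᵥ (Qᵀ *ᵥ (Q *ᵥ h2)) := by
        simp [Matrix.mulVec, dotProduct, hb, Matrix.transpose_apply]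
      rw [ebj, dot_mulVec_eq Qᵀ (b j) (Q *ᵥ h2), Matrix.transpose_transpose, h2eq,
        dot_mulVec_eq Q (Q *ᵥ b j) (U *ᵥ u), dot_mulVec_eq U (Qᵀ *ᵥ (Q *ᵥ b j)) u]
    calc w ⬝ᵥ (Dtdᵀ *ᵥ (Qᵀ *ᵥ (Q *ᵥ h2)))
        = ∑ j, w j * (Dtdᵀ *ᵥ (Qᵀ *ᵥ (Q *ᵥ h2))) j := rfl
    _ = ∑ j, w j * (c j ⬝ᵥ u) := Finset.sum_congr rfl fun j _ => by rw [hterm j]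
  have hbdd : BddAbove (Set.range fun j : Fin E × Fin (d ^ 2) =>
      Real.sqrt (∑ q, (c j q) ^ 2)) := Set.Finite.bddAbove (Set.finite_range _)
  have hle : ∀ j, Real.sqrt (∑ q, (c j q) ^ 2) ≤ M := fun j => le_ciSup hbdd j
  have hMnn : 0 ≤ M := by
    rcases isEmpty_or_nonempty (Fin E × Fin (d ^ 2)) with hE | hE
    · rw [hM, Real.iSup_of_isEmpty]
    · exact le_trans (Real.sqrt_nonneg _) (hle hE.some)
  have hun : Real.sqrt (∑ q, u q ^ 2) = Real.sqrt (∑ q, h2 q ^ 2) := by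
    rw [hnormeq]
  have step1 : |(Q *ᵥ h1) ⬝ᵥ (Q *ᵥ h2)|
      ≤ (∑ j, |w j|) * (M * Real.sqrt (∑ q, h2 q ^ 2)) := by
    rw [hkey]
    calc |∑ j, w j * (c j ⬝ᵥ u)| ≤ ∑ j, |w j * (c j ⬝ᵥ u)| :=
          Finset.abs_sum_le_sum_abs _ _
    _ ≤ ∑ j, |w j| * (M * Real.sqrt (∑ q, h2 q ^ 2)) := by
        apply Finset.sum_le_sum
        intro j _
        rw [abs_mul]
        refine mul_le_mul_of_nonneg_left ?_ (abs_nonneg _)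
        calc |c j ⬝ᵥ u| ≤ Real.sqrt (∑ q, (c j q) ^ 2) * Real.sqrt (∑ q, u q ^ 2) := by
              simpa [dotProduct] using abs_sum_le_sqrt (c j) u
        _ ≤ M * Real.sqrt (∑ q, h2 q ^ 2) := by
              rw [← hun]
              exact mul_le_mul_of_nonneg_right (hle j) (Real.sqrt_nonneg _)
    _ = (∑ j, |w j|) * (M * Real.sqrt (∑ q, h2 q ^ 2)) := by rw [Finset.sum_mul]
  have hsum : ∑ j, |w j|
      ≤ 1 + 4 * ∑ p ∈ S, |w p| + 4 * ∑ p ∈ Sᶜ, |(Dt *ᵥ astar) p| := by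
    have h1' : Real.sqrt (∑ q, h q ^ 2) = 1 := by rw [hnorm, Real.sqrt_one]
    rw [h1'] at hcone
    have split := Finset.sum_add_sum_compl S (fun p => |w p|)
    linarith
  calc |(Q *ᵥ h1) ⬝ᵥ (Q *ᵥ h2)|
      ≤ (∑ j, |w j|) * (M * Real.sqrt (∑ q, h2 q ^ 2)) := step1
  _ ≤ (1 + 4 * ∑ p ∈ S, |w p| + 4 * ∑ p ∈ Sᶜ, |(Dt *ᵥ astar) p|)
        * (M * Real.sqrt (∑ q, h2 q ^ 2)) :=
      mul_le_mul_of_nonneg_right hsum (mul_nonneg hMnn (Real.sqrt_nonneg _))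
  _ = (1 + 4 * ∑ p ∈ S, |w p| + 4 * ∑ p ∈ Sᶜ, |(Dt *ᵥ astar) p|)
        * M * Real.sqrt (∑ q, h2 q ^ 2) := by ring
end

section
/- Let T ≥ 1, 0 ≤ ρ < 1, and for a, b ∈ [d] define g_{a,b}(A) := Σ_{t=1}^{T} Σ_{s=0}^{t−1} e_bᵀ A^s (A^s)ᵀ e_a for A ∈ ℝ^{d×d} (i.e., g_{a,b}(A) is the (b,a) entry of G(A) = Σ_{t=1}^T Γ_{t−1}(A)). Then for all A, B ∈ ℝ^{d×d} with ‖A‖₂ ≤ ρ and ‖B‖₂ ≤ ρ: |g_{a,b}(A) − g_{a,b}(B)| ≤ L_T(ρ) ‖A − B‖_F, where L_T(ρ) := 2 Σ_{s=1}^{T−1} (T − s) s ρ^{2s−1}. Moreover L_T(ρ) ≤ 2 ρ T / (1 − ρ²)². -/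
open Matrix
open scoped Matrix.Norms.L2Operator

/-- The spectral norm (ℓ2→ℓ2 operator norm) of a real matrix, as the supremum of
`‖A x‖₂` over the unit ℓ2 ball. -/
noncomputable def specNorm {α β : Type*} [Fintype α] [Fintype β]
    (A : Matrix α β ℝ) : ℝ :=
  sSup {r : ℝ | ∃ x : β → ℝ, (∑ i, x i ^ 2) ≤ 1 ∧
    r = Real.sqrt (∑ j, ((A *ᵥ x) j) ^ 2)}

section Aux

variable {n m : Type*} [Fintype n] [Fintype m] [DecidableEq n] [DecidableEq m]

set_option linter.unusedSectionVars false

private lemma norm_euc (x : EuclideanSpace ℝ n) : ‖x‖ = Real.sqrt (∑ i, x i ^ 2) := by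
  simp [EuclideanSpace.norm_eq, Real.norm_eq_abs, sq_abs]

private lemma mulVec_sqrt_le (A : Matrix m n ℝ) (x : n → ℝ) :
    Real.sqrt (∑ j, ((A *ᵥ x) j) ^ 2) ≤ ‖A‖ * Real.sqrt (∑ i, x i ^ 2) := by
  have h := A.l2_opNorm_mulVec ((WithLp.equiv 2 (n → ℝ)).symm x)
  simpa [norm_euc] using h

private lemma zero_mem_specSet (A : Matrix m n ℝ) :
    (0:ℝ) ∈ {r : ℝ | ∃ x : n → ℝ, (∑ i, x i ^ 2) ≤ 1 ∧
      r = Real.sqrt (∑ j, ((A *ᵥ x) j) ^ 2)} :=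
  ⟨0, by simp, by simp [Matrix.mulVec_zero]⟩

private lemma bddAbove_specSet (A : Matrix m n ℝ) :
    BddAbove {r : ℝ | ∃ x : n → ℝ, (∑ i, x i ^ 2) ≤ 1 ∧
      r = Real.sqrt (∑ j, ((A *ᵥ x) j) ^ 2)} := by
  refine ⟨‖A‖, fun r hr => ?_⟩
  obtain ⟨x, hx, rfl⟩ := hr
  calc Real.sqrt (∑ j, ((A *ᵥ x) j) ^ 2) ≤ ‖A‖ * Real.sqrt (∑ i, x i ^ 2) := mulVec_sqrt_le A x
  _ ≤ ‖A‖ * 1 := mul_le_mul_of_nonneg_left (Real.sqrt_le_one.mpr hx) (norm_nonneg A)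
  _ = ‖A‖ := mul_one _

private lemma specNorm_nonneg' (A : Matrix m n ℝ) : 0 ≤ specNorm A :=
  le_csSup (bddAbove_specSet A) (zero_mem_specSet A)

private lemma opNorm_le_specNorm (A : Matrix m n ℝ) : ‖A‖ ≤ specNorm A := by
  rw [Matrix.l2_opNorm_def]
  refine ContinuousLinearMap.opNorm_le_bound _ (specNorm_nonneg' A) (fun x => ?_)
  by_cases hx : x = 0
  · simp [hx]
  have hxn : (0:ℝ) < ‖x‖ := norm_pos_iff.mpr hx
  set c : ℝ := ‖x‖ with hc
  set v : n → ℝ := fun i => x i with hv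
  have hsum : ∑ i, v i ^ 2 = c ^ 2 := by
    have := norm_euc x
    rw [this] at hc
    rw [hc, Real.sq_sqrt]
    positivity
  set y : n → ℝ := fun i => c⁻¹ * v i with hy
  have hysum : (∑ i, y i ^ 2) ≤ 1 := by
    have : ∑ i, y i ^ 2 = c⁻¹ ^ 2 * ∑ i, v i ^ 2 := by
      simp [hy, mul_pow, Finset.mul_sum]
    rw [this, hsum]
    rw [inv_pow]
    rw [inv_mul_cancel₀ (by positivity)]
  have hmem : Real.sqrt (∑ j, ((A *ᵥ y) j) ^ 2) ∈ {r : ℝ | ∃ x : n → ℝ,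
      (∑ i, x i ^ 2) ≤ 1 ∧ r = Real.sqrt (∑ j, ((A *ᵥ x) j) ^ 2)} := ⟨y, hysum, rfl⟩
  have hle : Real.sqrt (∑ j, ((A *ᵥ y) j) ^ 2) ≤ specNorm A :=
    le_csSup (bddAbove_specSet A) hmem
  have hAy : ∀ j, (A *ᵥ y) j = c⁻¹ * (A *ᵥ v) j := by
    intro j
    have : A *ᵥ y = c⁻¹ • (A *ᵥ v) := by
      rw [hy]
      rw [show (fun i => c⁻¹ * v i) = c⁻¹ • v from rfl, Matrix.mulVec_smul]
    simp [this]
  have hAy2 : Real.sqrt (∑ j, ((A *ᵥ y) j) ^ 2) = c⁻¹ * Real.sqrt (∑ j, ((A *ᵥ v) j) ^ 2) := by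
    simp only [hAy, mul_pow, ← Finset.mul_sum]
    rw [Real.sqrt_mul (by positivity), Real.sqrt_sq (by positivity)]
  rw [hAy2] at hle
  rw [norm_euc]
  show Real.sqrt (∑ j, ((A *ᵥ v) j) ^ 2) ≤ specNorm A * ‖x‖
  calc Real.sqrt (∑ j, ((A *ᵥ v) j) ^ 2) = c * (c⁻¹ * Real.sqrt (∑ j, ((A *ᵥ v) j) ^ 2)) := by
        field_simp
  _ ≤ c * specNorm A := by gcongr
  _ = specNorm A * c := mul_comm _ _

private lemma entry_abs_le_opNorm (M : Matrix m n ℝ) (b : m) (a : n) : |M b a| ≤ ‖M‖ := by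
  have h1 : M b a = (M *ᵥ Pi.single a 1) b := by
    simp [Matrix.mulVec_single]
  have h2 : |(M *ᵥ Pi.single a 1) b| ≤ Real.sqrt (∑ j, ((M *ᵥ Pi.single a 1) j) ^ 2) := by
    rw [← Real.sqrt_sq_eq_abs]
    apply Real.sqrt_le_sqrt
    exact Finset.single_le_sum (f := fun j => ((M *ᵥ Pi.single a 1) j) ^ 2)
      (fun j _ => sq_nonneg _) (Finset.mem_univ b)
  have h3 : (∑ i, (Pi.single a 1 : n → ℝ) i ^ 2) = 1 := by
    simp [Pi.single_apply]
  calc |M b a| ≤ Real.sqrt (∑ j, ((M *ᵥ Pi.single a 1) j) ^ 2) := h1 ▸ h2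
  _ ≤ ‖M‖ * Real.sqrt (∑ i, (Pi.single a 1 : n → ℝ) i ^ 2) := mulVec_sqrt_le _ _
  _ = ‖M‖ := by rw [h3, Real.sqrt_one, mul_one]

private lemma opNorm_le_frob (A : Matrix m n ℝ) :
    ‖A‖ ≤ Real.sqrt (∑ x, ∑ y, (A x y) ^ 2) := by
  rw [Matrix.l2_opNorm_def]
  refine ContinuousLinearMap.opNorm_le_bound _ (Real.sqrt_nonneg _) (fun x => ?_)
  rw [norm_euc, norm_euc]
  show Real.sqrt (∑ j, ((A *ᵥ (fun i => x i)) j) ^ 2) ≤ _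
  rw [← Real.sqrt_mul (by positivity)]
  apply Real.sqrt_le_sqrt
  rw [Finset.sum_mul]
  apply Finset.sum_le_sum
  intro j _
  have := Finset.sum_mul_sq_le_sq_mul_sq Finset.univ (fun i => A j i) (fun i => x i)
  calc ((A *ᵥ fun i => x i) j) ^ 2 = (∑ i, A j i * x i) ^ 2 := by
        simp [Matrix.mulVec, dotProduct]
  _ ≤ (∑ i, A j i ^ 2) * ∑ i, x i ^ 2 := this

private lemma norm_transpose_real (A : Matrix n n ℝ) : ‖Aᵀ‖ = ‖A‖ := by
  have : Aᵀ = Aᴴ := by ext i j; simp [Matrix.conjTranspose_apply]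
  rw [this, Matrix.l2_opNorm_conjTranspose]

private lemma norm_one_le_matrix : ‖(1 : Matrix n n ℝ)‖ ≤ 1 := by
  rw [Matrix.cstar_norm_def, _root_.map_one]
  exact ContinuousLinearMap.norm_id_le

private lemma norm_pow_le_matrix {ρ : ℝ} (A : Matrix n n ℝ) (hA : ‖A‖ ≤ ρ) :
    ∀ s, ‖A ^ s‖ ≤ ρ ^ s := by
  intro s
  induction s with
  | zero => simpa using norm_one_le_matrix
  | succ k ih =>
    have h0 : (0:ℝ) ≤ ρ := le_trans (norm_nonneg A) hA
    calc ‖A ^ (k+1)‖ = ‖A * A ^ k‖ := by rw [pow_succ']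
    _ ≤ ‖A‖ * ‖A ^ k‖ := norm_mul_le _ _
    _ ≤ ρ * ρ ^ k := mul_le_mul hA ih (norm_nonneg _) h0
    _ = ρ ^ (k+1) := (pow_succ' ρ k).symm

private lemma pow_sub_pow_norm_le {ρ : ℝ} (A B : Matrix n n ℝ) (hρ0 : 0 ≤ ρ)
    (hA : ‖A‖ ≤ ρ) (hB : ‖B‖ ≤ ρ) :
    ∀ s : ℕ, ‖A ^ s - B ^ s‖ ≤ (s : ℝ) * ρ ^ (s - 1) * ‖A - B‖ := by
  intro s
  induction s with
  | zero => simp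
  | succ k ih =>
    have key : A ^ (k+1) - B ^ (k+1) = A * (A ^ k - B ^ k) + (A - B) * B ^ k := by
      rw [pow_succ', pow_succ']
      noncomm_ring
    calc ‖A ^ (k+1) - B ^ (k+1)‖ ≤ ‖A * (A ^ k - B ^ k)‖ + ‖(A - B) * B ^ k‖ := by
          rw [key]; exact norm_add_le _ _
    _ ≤ ‖A‖ * ‖A ^ k - B ^ k‖ + ‖A - B‖ * ‖B ^ k‖ :=
        add_le_add (norm_mul_le _ _) (norm_mul_le _ _)
    _ ≤ ρ * ((k : ℝ) * ρ ^ (k - 1) * ‖A - B‖) + ‖A - B‖ * ρ ^ k := by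
        apply add_le_add
        · apply mul_le_mul hA ih (norm_nonneg _) hρ0
        · exact mul_le_mul_of_nonneg_left (norm_pow_le_matrix B hB k) (norm_nonneg _)
    _ ≤ ((k:ℝ)+1) * ρ ^ k * ‖A - B‖ := by
        have hk : ρ * ((k : ℝ) * ρ ^ (k - 1)) ≤ (k : ℝ) * ρ ^ k := by
          cases k with
          | zero => simp
          | succ j =>
            have : ρ * ρ ^ (j + 1 - 1) = ρ ^ (j + 1) := by
              simp [pow_succ, mul_comm]
            nlinarith [pow_nonneg hρ0 j, this]
        nlinarith [norm_nonneg (A - B), hk]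
    _ = ((k+1 : ℕ) : ℝ) * ρ ^ ((k+1) - 1) * ‖A - B‖ := by push_cast; ring_nf

end Aux

private lemma sum_tri (g : ℕ → ℝ) : ∀ T : ℕ, (∑ t ∈ Finset.range T, ∑ s ∈ Finset.range (t+1), g s)
    = ∑ s ∈ Finset.range T, ((T:ℝ) - (s:ℝ)) * g s := by
  intro T
  induction T with
  | zero => simp
  | succ N ih =>
    rw [Finset.sum_range_succ, ih]
    have h1 : ∀ s ∈ Finset.range (N+1), (((N+1 : ℕ):ℝ) - (s:ℝ)) * g s
        = ((N:ℝ) - (s:ℝ)) * g s + g s := by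
      intro s _; push_cast; ring
    rw [Finset.sum_congr rfl h1, Finset.sum_add_distrib,
      Finset.sum_range_succ (fun s => ((N:ℝ) - (s:ℝ)) * g s)]
    simp

private lemma geom_bound {y : ℝ} (hy0 : 0 ≤ y) (hy1 : y < 1) (N : ℕ) :
    ∑ m ∈ Finset.range N, ((m:ℝ)+1) * y ^ m ≤ 1 / (1-y)^2 := by
  have hy : ‖y‖ < 1 := by rw [Real.norm_eq_abs, abs_of_nonneg hy0]; exact hy1
  have hsum1 : Summable (fun m : ℕ => (m:ℝ) * y ^ m) := by
    simpa using summable_pow_mul_geometric_of_norm_lt_one 1 hy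
  have hsum2 : Summable (fun m : ℕ => y ^ m) := summable_geometric_of_norm_lt_one hy
  have hsum : Summable (fun m : ℕ => ((m:ℝ)+1) * y ^ m) := by
    have := hsum1.add hsum2
    convert this using 2 with m
    ring
  have h1y : (1:ℝ) - y ≠ 0 := by linarith
  have htsum : ∑' m : ℕ, ((m:ℝ)+1) * y ^ m = 1 / (1-y)^2 := by
    have e1 : ∑' m : ℕ, ((m:ℝ)+1) * y ^ m = (∑' m : ℕ, (m:ℝ) * y ^ m) + ∑' m : ℕ, y ^ m := by
      rw [← Summable.tsum_add hsum1 hsum2]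
      congr 1; ext m; ring
    rw [e1, tsum_coe_mul_geometric_of_norm_lt_one hy, tsum_geometric_of_lt_one hy0 hy1]
    field_simp
    ring
  calc ∑ m ∈ Finset.range N, ((m:ℝ)+1) * y ^ m ≤ ∑' m : ℕ, ((m:ℝ)+1) * y ^ m :=
        Summable.sum_le_tsum _ (fun m _ => by positivity) hsum
  _ = 1 / (1-y)^2 := htsum

/-- Entrywise Lipschitz control of the controllability aggregate.
With `g_{a,b}(A) = Σ_{t=1}^T Σ_{s=0}^{t−1} e_bᵀ A^s (A^s)ᵀ e_a`, for all `A, B` with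
`‖A‖₂ ≤ ρ`, `‖B‖₂ ≤ ρ` (`0 ≤ ρ < 1`) one has
`|g_{a,b}(A) − g_{a,b}(B)| ≤ L_T(ρ) ‖A − B‖_F`, where
`L_T(ρ) = 2 Σ_{s=1}^{T−1} (T − s) s ρ^{2s−1} ≤ 2ρT/(1 − ρ²)²`. -/
theorem grammian_entry_lipschitz {d T : ℕ} (hT : 1 ≤ T) (ρ : ℝ)
    (hρ0 : 0 ≤ ρ) (hρ1 : ρ < 1) (L : ℝ)
    (hL : L = 2 * ∑ s ∈ Finset.Ico 1 T, ((T : ℝ) - (s : ℝ)) * (s : ℝ) * ρ ^ (2 * s - 1)) :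
    (∀ A B : Matrix (Fin d) (Fin d) ℝ, specNorm A ≤ ρ → specNorm B ≤ ρ →
      ∀ a b : Fin d,
        |(∑ t ∈ Finset.range T, ∑ s ∈ Finset.range (t + 1), A ^ s * (A ^ s)ᵀ) b a
            - (∑ t ∈ Finset.range T, ∑ s ∈ Finset.range (t + 1), B ^ s * (B ^ s)ᵀ) b a|
          ≤ L * Real.sqrt (∑ x, ∑ y, (A x y - B x y) ^ 2)) ∧
    L ≤ 2 * ρ * (T : ℝ) / (1 - ρ ^ 2) ^ 2 := by
  constructor
  · intro A B hA hB a b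
    set F : ℝ := Real.sqrt (∑ x, ∑ y, (A x y - B x y) ^ 2) with hF
    have hF0 : 0 ≤ F := Real.sqrt_nonneg _
    have hAop : ‖A‖ ≤ ρ := (opNorm_le_specNorm A).trans hA
    have hBop : ‖B‖ ≤ ρ := (opNorm_le_specNorm B).trans hB
    have hABF : ‖A - B‖ ≤ F := by
      have := opNorm_le_frob (A - B)
      simpa [Matrix.sub_apply] using this
    -- per-s entry bound
    set c : ℕ → ℝ := fun s => 2 * (s:ℝ) * ρ ^ (2 * s - 1) with hcdef
    have hkey : ∀ s : ℕ, |(A ^ s * (A ^ s)ᵀ) b a - (B ^ s * (B ^ s)ᵀ) b a| ≤ c s * F := by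
      intro s
      cases s with
      | zero => simp [hcdef]
      | succ k =>
        set s := k + 1 with hs
        have hs1 : 1 ≤ s := Nat.le_add_left 1 k
        set M : Matrix (Fin d) (Fin d) ℝ := A ^ s * (A ^ s)ᵀ - B ^ s * (B ^ s)ᵀ with hM
        have hMdecomp : M = A ^ s * ((A ^ s)ᵀ - (B ^ s)ᵀ) + (A ^ s - B ^ s) * (B ^ s)ᵀ := by
          rw [hM]; noncomm_ring
        have hdiff : ‖A ^ s - B ^ s‖ ≤ (s:ℝ) * ρ ^ (s - 1) * ‖A - B‖ :=
          pow_sub_pow_norm_le A B hρ0 hAop hBop s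
        have hdiffT : ‖(A ^ s)ᵀ - (B ^ s)ᵀ‖ ≤ (s:ℝ) * ρ ^ (s - 1) * ‖A - B‖ := by
          rw [← Matrix.transpose_sub, norm_transpose_real]; exact hdiff
        have hApow : ‖A ^ s‖ ≤ ρ ^ s := norm_pow_le_matrix A hAop s
        have hBpowT : ‖(B ^ s)ᵀ‖ ≤ ρ ^ s := by
          rw [norm_transpose_real]; exact norm_pow_le_matrix B hBop s
        have hMnorm : ‖M‖ ≤ 2 * (s:ℝ) * (ρ ^ s * ρ ^ (s-1)) * ‖A - B‖ := by
          calc ‖M‖ ≤ ‖A ^ s * ((A ^ s)ᵀ - (B ^ s)ᵀ)‖ + ‖(A ^ s - B ^ s) * (B ^ s)ᵀ‖ := by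
                rw [hMdecomp]; exact norm_add_le _ _
          _ ≤ ‖A ^ s‖ * ‖(A ^ s)ᵀ - (B ^ s)ᵀ‖ + ‖A ^ s - B ^ s‖ * ‖(B ^ s)ᵀ‖ :=
              add_le_add (norm_mul_le _ _) (norm_mul_le _ _)
          _ ≤ ρ ^ s * ((s:ℝ) * ρ ^ (s - 1) * ‖A - B‖)
              + ((s:ℝ) * ρ ^ (s - 1) * ‖A - B‖) * ρ ^ s := by
              apply add_le_add
              · exact mul_le_mul hApow hdiffT (norm_nonneg _) (by positivity)
              · refine mul_le_mul hdiff hBpowT (norm_nonneg _) ?_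
                positivity
          _ = 2 * (s:ℝ) * (ρ ^ s * ρ ^ (s-1)) * ‖A - B‖ := by ring
        have hexp : ρ ^ s * ρ ^ (s - 1) = ρ ^ (2 * s - 1) := by
          rw [← pow_add]
          congr 1
          omega
        have hMba : (A ^ s * (A ^ s)ᵀ) b a - (B ^ s * (B ^ s)ᵀ) b a = M b a := by
          simp [hM, Matrix.sub_apply]
        rw [hMba]
        calc |M b a| ≤ ‖M‖ := entry_abs_le_opNorm M b a
        _ ≤ 2 * (s:ℝ) * (ρ ^ s * ρ ^ (s-1)) * ‖A - B‖ := hMnorm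
        _ = 2 * (s:ℝ) * ρ ^ (2 * s - 1) * ‖A - B‖ := by rw [hexp]
        _ ≤ 2 * (s:ℝ) * ρ ^ (2 * s - 1) * F := by
            apply mul_le_mul_of_nonneg_left hABF
            positivity
        _ = c s * F := by rw [hcdef]
    -- rewrite entries of matrix sums
    have hentry : ∀ C : Matrix (Fin d) (Fin d) ℝ → Prop, True := fun _ => trivial
    have hAe : (∑ t ∈ Finset.range T, ∑ s ∈ Finset.range (t + 1), A ^ s * (A ^ s)ᵀ) b a
        = ∑ t ∈ Finset.range T, ∑ s ∈ Finset.range (t + 1), (A ^ s * (A ^ s)ᵀ) b a := by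
      simp [Matrix.sum_apply]
    have hBe : (∑ t ∈ Finset.range T, ∑ s ∈ Finset.range (t + 1), B ^ s * (B ^ s)ᵀ) b a
        = ∑ t ∈ Finset.range T, ∑ s ∈ Finset.range (t + 1), (B ^ s * (B ^ s)ᵀ) b a := by
      simp [Matrix.sum_apply]
    rw [hAe, hBe, ← Finset.sum_sub_distrib]
    have habs : |∑ t ∈ Finset.range T, (∑ s ∈ Finset.range (t + 1), (A ^ s * (A ^ s)ᵀ) b a
          - ∑ s ∈ Finset.range (t + 1), (B ^ s * (B ^ s)ᵀ) b a)|
        ≤ ∑ t ∈ Finset.range T, ∑ s ∈ Finset.range (t + 1), c s * F := by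
      calc _ ≤ ∑ t ∈ Finset.range T, |∑ s ∈ Finset.range (t + 1), (A ^ s * (A ^ s)ᵀ) b a
          - ∑ s ∈ Finset.range (t + 1), (B ^ s * (B ^ s)ᵀ) b a| := Finset.abs_sum_le_sum_abs _ _
      _ ≤ ∑ t ∈ Finset.range T, ∑ s ∈ Finset.range (t + 1), c s * F := by
          apply Finset.sum_le_sum
          intro t _
          rw [← Finset.sum_sub_distrib]
          calc |∑ s ∈ Finset.range (t + 1), ((A ^ s * (A ^ s)ᵀ) b a - (B ^ s * (B ^ s)ᵀ) b a)|
              ≤ ∑ s ∈ Finset.range (t + 1), |(A ^ s * (A ^ s)ᵀ) b a - (B ^ s * (B ^ s)ᵀ) b a| :=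
              Finset.abs_sum_le_sum_abs _ _
          _ ≤ ∑ s ∈ Finset.range (t + 1), c s * F := Finset.sum_le_sum fun s _ => hkey s
    refine habs.trans ?_
    -- compute the bound sum
    have h1 : ∑ t ∈ Finset.range T, ∑ s ∈ Finset.range (t + 1), c s * F
        = (∑ s ∈ Finset.range T, ((T:ℝ) - (s:ℝ)) * (c s * F)) := sum_tri (fun s => c s * F) T
    rw [h1]
    have h2 : ∑ s ∈ Finset.range T, ((T:ℝ) - (s:ℝ)) * (c s * F) = L * F := by
      rw [hL, Finset.range_eq_Ico,
        ← Finset.sum_Ico_consecutive (fun s : ℕ => ((T:ℝ) - (s:ℝ)) * (c s * F))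
          (Nat.zero_le 1) hT]
      have h0 : ∑ s ∈ Finset.Ico (0:ℕ) 1, ((T:ℝ) - (s:ℝ)) * (c s * F) = 0 := by
        simp [hcdef, Finset.sum_Ico_eq_sum_range]
      rw [h0, zero_add,
        show (2 * ∑ s ∈ Finset.Ico 1 T, ((T:ℝ) - (s:ℝ)) * (s:ℝ) * ρ ^ (2*s-1)) * F
            = ∑ s ∈ Finset.Ico 1 T, 2 * (((T:ℝ) - (s:ℝ)) * (s:ℝ) * ρ ^ (2*s-1)) * F from by
          rw [Finset.mul_sum, Finset.sum_mul]]
      apply Finset.sum_congr rfl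
      intro s _
      simp only [hcdef]
      ring
    rw [h2]
  · -- L ≤ 2ρT/(1-ρ²)²
    have hy1 : ρ ^ 2 < 1 := by nlinarith
    have h1y : (0:ℝ) < 1 - ρ ^ 2 := by linarith
    have step : ∀ s ∈ Finset.Ico 1 T, ((T : ℝ) - (s : ℝ)) * (s : ℝ) * ρ ^ (2 * s - 1)
        ≤ (T:ℝ) * (ρ * ((s:ℝ) * (ρ^2) ^ (s-1))) := by
      intro s hs
      obtain ⟨hs1, hs2⟩ := Finset.mem_Ico.mp hs
      have hTs : (T:ℝ) - (s:ℝ) ≤ (T:ℝ) := by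
        have : (0:ℝ) ≤ (s:ℝ) := Nat.cast_nonneg s
        linarith
      have hexp : ρ ^ (2 * s - 1) = (ρ^2) ^ (s-1) * ρ := by
        rw [← pow_mul, ← pow_succ]
        congr 1
        omega
      calc ((T : ℝ) - (s : ℝ)) * (s : ℝ) * ρ ^ (2 * s - 1)
          = ((T:ℝ) - (s:ℝ)) * ((s:ℝ) * ((ρ^2) ^ (s-1) * ρ)) := by rw [hexp]; ring
      _ ≤ (T:ℝ) * ((s:ℝ) * ((ρ^2) ^ (s-1) * ρ)) :=
          mul_le_mul_of_nonneg_right hTs (by positivity)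
      _ = (T:ℝ) * (ρ * ((s:ℝ) * (ρ^2) ^ (s-1))) := by ring
    have hsum2 : ∑ s ∈ Finset.Ico 1 T, (s:ℝ) * (ρ^2) ^ (s-1) ≤ 1 / (1 - ρ^2)^2 := by
      rw [Finset.sum_Ico_eq_sum_range]
      have hcg : ∀ i ∈ Finset.range (T-1), ((1+i : ℕ):ℝ) * (ρ^2) ^ (1+i-1)
          = ((i:ℝ)+1) * (ρ^2) ^ i := by
        intro i _
        have h : 1 + i - 1 = i := by omega
        rw [h]; push_cast; ring
      rw [Finset.sum_congr rfl hcg]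
      exact geom_bound (by positivity) hy1 _
    calc L = 2 * ∑ s ∈ Finset.Ico 1 T, ((T : ℝ) - (s : ℝ)) * (s : ℝ) * ρ ^ (2 * s - 1) := hL
    _ ≤ 2 * ∑ s ∈ Finset.Ico 1 T, (T:ℝ) * (ρ * ((s:ℝ) * (ρ^2) ^ (s-1))) := by
        apply mul_le_mul_of_nonneg_left (Finset.sum_le_sum step) (by norm_num)
    _ = 2 * ((T:ℝ) * ρ) * ∑ s ∈ Finset.Ico 1 T, (s:ℝ) * (ρ^2) ^ (s-1) := by
        rw [Finset.mul_sum, Finset.mul_sum]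
        apply Finset.sum_congr rfl
        intro s _
        ring
    _ ≤ 2 * ((T:ℝ) * ρ) * (1 / (1 - ρ^2)^2) := by
        apply mul_le_mul_of_nonneg_left hsum2
        positivity
    _ = 2 * ρ * (T : ℝ) / (1 - ρ ^ 2) ^ 2 := by ring
end

section
/- There is an absolute constant C > 0 such that for all N ≥ 2 the following holds. Let L₁ ∈ ℝ^{N×N} be the Laplacian of the path graph on N vertices and let L = L₁ ⊗ I_N + I_N ⊗ L₁ ∈ ℝ^{N²×N²} be the Laplacian of the N×N two-dimensional grid graph. Then every diagonal entry of the Moore–Penrose pseudoinverse L† satisfies (L†)_{vv} ≤ C log N. Consequently, with S = L† Dᵀ for D the incidence matrix of the grid, max_v ‖S_{v,:}‖₂ ≤ C' √(log m), where m = N². -/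
open Matrix
open scoped Kronecker

/-- The Laplacian of the path graph on `N` vertices. -/
noncomputable def pathLap (N : ℕ) : Matrix (Fin N) (Fin N) ℝ :=
  Matrix.of fun i j =>
    if i = j then (if (i : ℕ) = 0 ∨ (i : ℕ) = N - 1 then 1 else 2)
    else if (i : ℕ) + 1 = (j : ℕ) ∨ (j : ℕ) + 1 = (i : ℕ) then -1 else 0

/-- The Laplacian `L = L₁ ⊗ I_N + I_N ⊗ L₁` of the `N × N` 2D grid. -/
noncomputable def gridLap2 (N : ℕ) : Matrix (Fin N × Fin N) (Fin N × Fin N) ℝ :=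
  pathLap N ⊗ₖ (1 : Matrix (Fin N) (Fin N) ℝ)
    + (1 : Matrix (Fin N) (Fin N) ℝ) ⊗ₖ pathLap N

open Finset Real

/-!
The path Laplacian is diagonalised by the orthonormal DCT-II basis `cos ((2i+1) k π / 2N)`, with
eigenvalues `4 sin² (k π / 2N) ≥ 4 (k/N)²` (Jordan's inequality), so the grid Laplacian is
diagonalised by the Kronecker square of that basis, with eigenvalues `λ(a,b) ≥ 4 (a² + b²) / N²`.
Inverting the nonzero eigenvalues gives `L†`, and as every squared basis entry is at most
`4 / N²`, `L†_vv = ∑ λ⁻¹ W_vx² ≤ ∑_{(a,b) ≠ 0} 1 / (a² + b²) = O(log N)`.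
For `S = L† Dᵀ`, `S Sᵀ = L† (Dᵀ D) L† = L†`, so `‖S_v‖² = L†_vv`.
-/

namespace IsMoorePenrose

variable {α β : Type*} [Fintype α] [Fintype β]

theorem transpose {A : Matrix α β ℝ} {B : Matrix β α ℝ} (h : IsMoorePenrose A B) :
    IsMoorePenrose Aᵀ Bᵀ := by
  obtain ⟨h₁, h₂, h₃, h₄⟩ := h
  refine ⟨?_, ?_, ?_, ?_⟩
  · rw [← transpose_mul, ← transpose_mul, ← Matrix.mul_assoc, h₁]
  · rw [← transpose_mul, ← transpose_mul, ← Matrix.mul_assoc, h₂]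
  · rw [← transpose_mul, transpose_transpose, h₄]
  · rw [← transpose_mul, transpose_transpose, h₃]

theorem unique {A : Matrix α β ℝ} {B B' : Matrix β α ℝ} (h : IsMoorePenrose A B)
    (h' : IsMoorePenrose A B') : B = B' := by
  obtain ⟨h₁, h₂, h₃, h₄⟩ := h
  obtain ⟨h₁', h₂', h₃', h₄'⟩ := h'
  have hAB : A * B = A * B' := by
    calc A * B = (A * B')ᵀ * (A * B)ᵀ := by
          rw [h₃, h₃', ← Matrix.mul_assoc, h₁']
      _ = A * B' := by rw [← transpose_mul, ← Matrix.mul_assoc, h₁, h₃']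
  have hBA : B * A = B' * A := by
    calc B * A = (B * A)ᵀ * (B' * A)ᵀ := by
          rw [h₄, h₄', Matrix.mul_assoc, ← Matrix.mul_assoc A, h₁']
      _ = B' * A := by
          rw [← transpose_mul, Matrix.mul_assoc, ← Matrix.mul_assoc A, h₁, h₄']
  calc B = B * A * B := h₂.symm
    _ = B' * A * B' := by rw [hBA, Matrix.mul_assoc, hAB, ← Matrix.mul_assoc]
    _ = B' := h₂'

theorem transpose_eq_self {A B : Matrix α α ℝ} (h : IsMoorePenrose A B) (hA : Aᵀ = A) :
    Bᵀ = B := by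
  have := h.transpose
  rw [hA] at this
  exact this.unique h

theorem sum_sq_mul_transpose_apply {E : Type*} [Fintype E] {D : Matrix E β ℝ}
    {B : Matrix β β ℝ} (h : IsMoorePenrose (Dᵀ * D) B) (v : β) :
    ∑ j, ((B * Dᵀ) v j) ^ 2 = B v v := by
  have hB : Bᵀ = B := h.transpose_eq_self (by rw [transpose_mul, transpose_transpose])
  have hGram : (B * Dᵀ) * (B * Dᵀ)ᵀ = B := by
    rw [transpose_mul, transpose_transpose, hB, Matrix.mul_assoc, ← Matrix.mul_assoc Dᵀ,
      ← Matrix.mul_assoc, h.2.1]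
  rw [← congrFun (congrFun hGram v) v, mul_apply]
  simp only [transpose_apply, sq]

end IsMoorePenrose

/-- `d⁻¹` is pointwise with `0⁻¹ = 0`: exactly the nonzero eigenvalues get inverted. -/
theorem isMoorePenrose_conj_diagonal {α : Type*} [Fintype α] [DecidableEq α]
    {W : Matrix α α ℝ} (hW : Wᵀ * W = 1) (d : α → ℝ) :
    IsMoorePenrose (W * diagonal d * Wᵀ) (W * diagonal d⁻¹ * Wᵀ) := by
  have conj_mul : ∀ e f : α → ℝ,
      W * diagonal e * Wᵀ * (W * diagonal f * Wᵀ) = W * diagonal (e * f) * Wᵀ := by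
    intro e f
    rw [show diagonal (e * f) = diagonal e * diagonal f from (diagonal_mul_diagonal e f).symm]
    simp only [Matrix.mul_assoc]
    rw [← Matrix.mul_assoc Wᵀ, hW, Matrix.one_mul]
  have conj_transpose : ∀ e : α → ℝ, (W * diagonal e * Wᵀ)ᵀ = W * diagonal e * Wᵀ := by
    intro e
    rw [transpose_mul, transpose_mul, transpose_transpose, diagonal_transpose, Matrix.mul_assoc]
  refine ⟨?_, ?_, ?_, ?_⟩
  · rw [conj_mul, conj_mul]
    congr
    funext x
    exact mul_inv_mul_cancel (d x)
  · rw [conj_mul, conj_mul]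
    congr
    funext x
    simpa using mul_inv_mul_cancel (d x)⁻¹
  · rw [conj_mul, conj_transpose]
  · rw [conj_mul, conj_transpose]

theorem conj_diagonal_apply_self {α : Type*} [Fintype α] [DecidableEq α]
    (W : Matrix α α ℝ) (d : α → ℝ) (v : α) :
    (W * diagonal d * Wᵀ) v v = ∑ x, d x * W v x ^ 2 := by
  rw [mul_apply]
  simp only [mul_diagonal, transpose_apply]
  exact Finset.sum_congr rfl fun x _ => by ring

theorem two_mul_sin_mul_sum_range_cos_odd_mul (n : ℕ) (θ : ℝ) :
    2 * sin θ * ∑ i ∈ range n, cos ((2 * i + 1) * θ) = sin (2 * n * θ) := by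
  induction n with
  | zero => simp
  | succ n ih =>
    rw [sum_range_succ, mul_add, ih, two_mul_sin_mul_cos,
      show θ - (2 * n + 1) * θ = -(2 * n * θ) by ring, sin_neg]
    push_cast
    ring_nf

theorem sum_range_cos_odd_mul_eq_zero (N : ℕ) {m : ℤ} (hm : ¬ (2 * N : ℤ) ∣ m) :
    ∑ i ∈ range N, cos ((2 * i + 1) * (m * π / (2 * N))) = 0 := by
  rcases Nat.eq_zero_or_pos N with rfl | hN
  · simp
  have hsin : sin (m * π / (2 * N)) ≠ 0 := by
    rw [Ne, sin_eq_zero_iff]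
    rintro ⟨k, hk⟩
    refine hm ⟨k, ?_⟩
    have hmk : (m : ℝ) = 2 * N * k := by
      field_simp at hk
      linarith
    exact_mod_cast hmk
  have h := two_mul_sin_mul_sum_range_cos_odd_mul N (m * π / (2 * N))
  rw [show 2 * (N : ℝ) * (m * π / (2 * N)) = m * π by field_simp, sin_int_mul_pi] at h
  simpa [hsin] using h

theorem sum_range_cos_odd_mul_mul_cos_odd_mul {N j k : ℕ} (hj : j < N) (hk : k < N) :
    ∑ i ∈ range N, cos ((2 * i + 1) * (j * π / (2 * N))) * cos ((2 * i + 1) * (k * π / (2 * N)))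
      = if j = k then (if j = 0 then (N : ℝ) else N / 2) else 0 := by
  set S : ℤ → ℝ := fun m => ∑ i ∈ range N, cos ((2 * i + 1) * (m * π / (2 * N))) with hS
  have hS0 : S 0 = N := by simp [hS]
  have hS_eq_zero : ∀ m : ℤ, m ≠ 0 → |m| < 2 * N → S m = 0 := fun m hm hlt =>
    sum_range_cos_odd_mul_eq_zero N fun hdvd => hm (Int.eq_zero_of_abs_lt_dvd hdvd hlt)
  have hsum : ∑ i ∈ range N,
      cos ((2 * i + 1) * (j * π / (2 * N))) * cos ((2 * i + 1) * (k * π / (2 * N)))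
        = (S (j - k) + S (j + k)) / 2 := by
    simp only [hS, ← sum_add_distrib, sum_div]
    refine sum_congr rfl fun i _ => ?_
    rw [eq_div_iff two_ne_zero, mul_comm, ← mul_assoc, two_mul_cos_mul_cos]
    push_cast
    ring_nf
  rw [hsum]
  by_cases hjk : j = k
  · subst hjk
    by_cases hj0 : j = 0
    · subst hj0
      simp [hS0]
    · rw [sub_self, hS0, hS_eq_zero (j + j) (by omega) (by rw [abs_lt]; omega)]
      simp [hj0]
  · rw [hS_eq_zero (j - k) (by omega) (by rw [abs_lt]; omega),
      hS_eq_zero (j + k) (by omega) (by rw [abs_lt]; omega)]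
    simp [hjk]

noncomputable def pathEigenbasis (N : ℕ) : Matrix (Fin N) (Fin N) ℝ :=
  of fun i k => √((if (k : ℕ) = 0 then 1 else 2) / N) * cos ((2 * i + 1) * (k * π / (2 * N)))

noncomputable def pathEigenvalue (N : ℕ) (k : Fin N) : ℝ := 4 * sin (k * π / (2 * N)) ^ 2

theorem pathEigenbasis_transpose_mul_self (N : ℕ) :
    (pathEigenbasis N)ᵀ * pathEigenbasis N = 1 := by
  ext j k
  have hsum := sum_range_cos_odd_mul_mul_cos_odd_mul j.isLt k.isLt
  rw [← Fin.sum_univ_eq_sum_range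
    (fun i => cos ((2 * i + 1) * (j * π / (2 * N))) * cos ((2 * i + 1) * (k * π / (2 * N))))]
    at hsum
  have hN : (0 : ℝ) < N := by exact_mod_cast j.pos
  simp only [mul_apply, transpose_apply, pathEigenbasis, of_apply, mul_mul_mul_comm _ (cos _),
    ← mul_sum, hsum, one_apply, Fin.ext_iff]
  by_cases hjk : (j : ℕ) = k
  · rw [Fin.ext hjk, if_pos rfl, if_pos rfl, Real.mul_self_sqrt (by positivity)]
    split_ifs <;> field_simp
  · simp [hjk]

theorem Fin.sum_univ_ite_coe_eq (N : ℕ) (m : ℤ) (g : ℤ → ℝ) :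
    ∑ l : Fin N, (if (l : ℤ) = m then g l else 0) = if 0 ≤ m ∧ m < N then g m else 0 := by
  rw [Fin.sum_univ_eq_sum_range (fun l => if (l : ℤ) = m then g l else 0)]
  split_ifs with hm
  · lift m to ℕ using hm.1
    rw [sum_eq_single_of_mem m (mem_range.2 (by exact_mod_cast hm.2))]
    · simp
    · intro l _ hl
      simp [hl]
  · refine sum_eq_zero fun l hl => if_neg ?_
    rw [mem_range] at hl
    omega

/-- `f` is reflected at both ends, so the degree-one boundary rows also act as second
differences. -/
theorem sum_pathLap_mul {N : ℕ} (hN : 2 ≤ N) (f : ℤ → ℝ) (h₀ : f (-1) = f 0)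
    (h₁ : f N = f (N - 1)) (i : Fin N) :
    ∑ l, pathLap N i l * f l = 2 * f i - f (i - 1) - f (i + 1) := by
  have hentry : ∀ l : Fin N, pathLap N i l * f l
      = (if l = i then (if (i : ℕ) = 0 ∨ (i : ℕ) = N - 1 then 1 else 2) * f i else 0)
        - (if (l : ℤ) = i + 1 then f l else 0) - (if (l : ℤ) = i - 1 then f l else 0) := by
    intro l
    simp only [pathLap, of_apply, Fin.ext_iff]
    split_ifs <;> first | omega | simp_all
  simp only [hentry, sum_sub_distrib, Fin.sum_univ_ite_coe_eq, sum_ite_eq', mem_univ, if_true]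
  have hi := i.isLt
  split_ifs <;> first | omega | skip
  · rw [show (i : ℤ) = 0 by omega, zero_sub, h₀]
    ring
  · rw [show (i : ℤ) + 1 = N by omega, h₁, show (N : ℤ) - 1 = i by omega]
    ring
  · ring

theorem pathLap_mul_pathEigenbasis {N : ℕ} (hN : 2 ≤ N) :
    pathLap N * pathEigenbasis N = pathEigenbasis N * diagonal (pathEigenvalue N) := by
  ext i k
  rw [mul_diagonal, mul_apply]
  simp only [pathEigenbasis, pathEigenvalue, of_apply, mul_left_comm _ (√_), ← mul_sum]
  set a : ℝ := k * π / (2 * N) with ha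
  set f : ℤ → ℝ := fun l => cos ((2 * l + 1) * a)
  have h₀ : f (-1) = f 0 := by
    simp only [f]
    norm_num
  have h₁ : f N = f (N - 1) := by
    have h2Na : 2 * N * a = k * π := by
      rw [ha]
      field_simp
    simp only [f, Int.cast_natCast, Int.cast_sub, Int.cast_one]
    rw [show (2 * N + 1) * a = k * π + a by linarith,
      show (2 * (N - 1) + 1) * a = k * π - a by linarith, cos_add, cos_sub, sin_nat_mul_pi]
    ring
  have hrow := sum_pathLap_mul hN f h₀ h₁ i
  simp only [f, Int.cast_natCast, Int.cast_sub, Int.cast_add, Int.cast_one] at hrow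
  rw [hrow, show (2 * ((i : ℕ) - 1 : ℝ) + 1) * a = (2 * i + 1) * a - 2 * a by ring,
    show (2 * ((i : ℕ) + 1 : ℝ) + 1) * a = (2 * i + 1) * a + 2 * a by ring,
    cos_sub, cos_add, cos_two_mul, sin_two_mul, cos_sq']
  ring

theorem sq_pathEigenbasis_apply_le (N : ℕ) (i k : Fin N) : pathEigenbasis N i k ^ 2 ≤ 2 / N := by
  have hN : (0 : ℝ) < N := by exact_mod_cast i.pos
  have hc : (if (k : ℕ) = 0 then (1 : ℝ) else 2) ≤ 2 := by split_ifs <;> norm_num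
  rw [pathEigenbasis, of_apply, mul_pow, Real.sq_sqrt (by positivity)]
  calc _ ≤ (2 : ℝ) / N * 1 :=
        mul_le_mul (by gcongr) (cos_sq_le_one _) (sq_nonneg _) (by positivity)
    _ = 2 / N := mul_one _

theorem pathEigenvalue_ge (N : ℕ) (k : Fin N) : 4 * ((k : ℝ) / N) ^ 2 ≤ pathEigenvalue N k := by
  have hN : (0 : ℝ) < N := by exact_mod_cast k.pos
  have hk : (k : ℝ) ≤ N := by exact_mod_cast k.isLt.le
  have hjordan := mul_le_sin (x := k * π / (2 * N)) (by positivity) (by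
    rw [div_le_div_iff₀ (by positivity) two_pos]
    nlinarith [pi_pos])
  rw [show 2 / π * (k * π / (2 * N)) = (k : ℝ) / N by field_simp] at hjordan
  rw [pathEigenvalue]
  gcongr

section KroneckerSum

variable {R α : Type*} [CommRing R] [Fintype α] [DecidableEq α]

theorem kronecker_transpose_mul_self {W : Matrix α α R} (hW : Wᵀ * W = 1) :
    (W ⊗ₖ W)ᵀ * (W ⊗ₖ W) = 1 := by
  rw [← kroneckerMap_transpose, ← mul_kronecker_mul, hW, one_kronecker_one]

theorem conj_diagonal_kronecker_add {W : Matrix α α R} (hW : Wᵀ * W = 1) (a : α → R) :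
    (W * diagonal a * Wᵀ) ⊗ₖ 1 + 1 ⊗ₖ (W * diagonal a * Wᵀ)
      = (W ⊗ₖ W) * diagonal (fun p => a p.1 + a p.2) * (W ⊗ₖ W)ᵀ := by
  have hone : (1 : Matrix α α R) = W * diagonal (fun _ => 1) * Wᵀ := by
    rw [diagonal_one, Matrix.mul_one, mul_eq_one_comm.mp hW]
  conv_lhs => rw [hone]
  rw [mul_kronecker_mul, mul_kronecker_mul, mul_kronecker_mul, mul_kronecker_mul,
    diagonal_kronecker_diagonal, diagonal_kronecker_diagonal, kroneckerMap_transpose,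
    ← Matrix.add_mul, ← Matrix.mul_add, diagonal_add]
  congr
  funext p
  simp only [one_mul, mul_one]

end KroneckerSum

noncomputable def gridEigenbasis (N : ℕ) : Matrix (Fin N × Fin N) (Fin N × Fin N) ℝ :=
  pathEigenbasis N ⊗ₖ pathEigenbasis N

noncomputable def gridEigenvalue (N : ℕ) (p : Fin N × Fin N) : ℝ :=
  pathEigenvalue N p.1 + pathEigenvalue N p.2

theorem pathLap_eq_conj_diagonal {N : ℕ} (hN : 2 ≤ N) :
    pathLap N = pathEigenbasis N * diagonal (pathEigenvalue N) * (pathEigenbasis N)ᵀ := by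
  rw [← pathLap_mul_pathEigenbasis hN, Matrix.mul_assoc,
    mul_eq_one_comm.mp (pathEigenbasis_transpose_mul_self N), Matrix.mul_one]

theorem gridLap2_eq_conj_diagonal {N : ℕ} (hN : 2 ≤ N) :
    gridLap2 N = gridEigenbasis N * diagonal (gridEigenvalue N) * (gridEigenbasis N)ᵀ := by
  rw [gridLap2, pathLap_eq_conj_diagonal hN,
    conj_diagonal_kronecker_add (pathEigenbasis_transpose_mul_self N)]
  rfl

theorem isMoorePenrose_gridLap2 {N : ℕ} (hN : 2 ≤ N) :
    IsMoorePenrose (gridLap2 N)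
      (gridEigenbasis N * diagonal (gridEigenvalue N)⁻¹ * (gridEigenbasis N)ᵀ) := by
  rw [gridLap2_eq_conj_diagonal hN]
  exact isMoorePenrose_conj_diagonal
    (kronecker_transpose_mul_self (pathEigenbasis_transpose_mul_self N)) _

theorem gridEigenvalue_inv_mul_sq_le (N : ℕ) (v x : Fin N × Fin N) :
    (gridEigenvalue N x)⁻¹ * gridEigenbasis N v x ^ 2 ≤ ((x.1 : ℝ) ^ 2 + (x.2 : ℝ) ^ 2)⁻¹ := by
  have hN : (0 : ℝ) < N := by exact_mod_cast v.1.pos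
  set q : ℝ := (x.1 : ℝ) ^ 2 + (x.2 : ℝ) ^ 2
  have hq : 4 * q / N ^ 2 ≤ gridEigenvalue N x := by
    calc 4 * q / N ^ 2 = 4 * ((x.1 : ℝ) / N) ^ 2 + 4 * ((x.2 : ℝ) / N) ^ 2 := by ring
      _ ≤ _ := add_le_add (pathEigenvalue_ge N x.1) (pathEigenvalue_ge N x.2)
  have hbasis : gridEigenbasis N v x ^ 2 ≤ 4 / N ^ 2 := by
    rw [gridEigenbasis, kroneckerMap_apply, mul_pow]
    calc _ ≤ (2 : ℝ) / N * (2 / N) := mul_le_mul (sq_pathEigenbasis_apply_le N v.1 x.1)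
          (sq_pathEigenbasis_apply_le N v.2 x.2) (sq_nonneg _) (by positivity)
      _ = 4 / N ^ 2 := by ring
  rcases (by positivity : 0 ≤ q).eq_or_lt with hq0 | hq0
  · have hx₁ : (x.1 : ℝ) = 0 := by nlinarith [sq_nonneg (x.1 : ℝ), sq_nonneg (x.2 : ℝ)]
    have hx₂ : (x.2 : ℝ) = 0 := by nlinarith [sq_nonneg (x.1 : ℝ), sq_nonneg (x.2 : ℝ)]
    simp [gridEigenvalue, pathEigenvalue, hx₁, hx₂, ← hq0]
  · calc (gridEigenvalue N x)⁻¹ * gridEigenbasis N v x ^ 2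
        ≤ (4 * q / N ^ 2)⁻¹ * (4 / N ^ 2) := by gcongr
      _ = q⁻¹ := by field_simp

/-- The `(0, 0)` term is `0⁻¹ = 0`. -/
theorem sum_range_sum_range_inv_sq_add_sq_le (n : ℕ) :
    ∑ a ∈ range (n + 1), ∑ b ∈ range (n + 1), ((a : ℝ) ^ 2 + (b : ℝ) ^ 2)⁻¹
      ≤ 3 * harmonic n := by
  induction n with
  | zero => simp
  | succ n ih =>
    rw [sum_range_succ, sum_congr rfl fun a _ => sum_range_succ _ (n + 1), sum_add_distrib,
      harmonic_succ]
    push_cast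
    set m : ℝ := (n : ℝ) + 1
    have hm : 1 ≤ m := by simp [m]
    have hcross : ∀ c : ℕ, ((c : ℝ) ^ 2 + m ^ 2)⁻¹ ≤ (m ^ 2)⁻¹ := fun c =>
      inv_anti₀ (by positivity) (by nlinarith [sq_nonneg (c : ℝ)])
    have hcol : ∑ a ∈ range (n + 1), ((a : ℝ) ^ 2 + m ^ 2)⁻¹ ≤ m * (m ^ 2)⁻¹ :=
      (sum_le_card_nsmul _ _ _ fun a _ => hcross a).trans_eq (by simp [m])
    have hrow : ∑ b ∈ range (n + 1 + 1), (m ^ 2 + (b : ℝ) ^ 2)⁻¹ ≤ (m + 1) * (m ^ 2)⁻¹ :=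
      (sum_le_card_nsmul _ _ _ fun b _ => add_comm (m ^ 2) _ ▸ hcross b).trans_eq
        (by simp [m])
    have hinc : m * (m ^ 2)⁻¹ + (m + 1) * (m ^ 2)⁻¹ ≤ 3 * m⁻¹ := by
      rw [← add_mul, show 3 * m⁻¹ = 3 * m * (m ^ 2)⁻¹ by field_simp]
      gcongr
      linarith
    linarith

theorem IsMoorePenrose.gridLap2_apply_self_le {N : ℕ} (hN : 2 ≤ N)
    {B : Matrix (Fin N × Fin N) (Fin N × Fin N) ℝ} (hB : IsMoorePenrose (gridLap2 N) B)
    (v : Fin N × Fin N) : B v v ≤ 8 * log N := by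
  obtain ⟨n, rfl⟩ : ∃ n, N = n + 1 := ⟨N - 1, by omega⟩
  have hlog : log 2 ≤ log (n + 1 : ℕ) := log_le_log two_pos (by exact_mod_cast hN)
  have hlog_mono : log n ≤ log (n + 1 : ℕ) := by
    rcases n.eq_zero_or_pos with rfl | hn
    · simp
    · exact log_le_log (by positivity) (by push_cast; linarith)
  rw [hB.unique (isMoorePenrose_gridLap2 hN), conj_diagonal_apply_self]
  calc ∑ x, (gridEigenvalue (n + 1))⁻¹ x * gridEigenbasis (n + 1) v x ^ 2
      ≤ ∑ x : Fin (n + 1) × Fin (n + 1), ((x.1 : ℝ) ^ 2 + (x.2 : ℝ) ^ 2)⁻¹ :=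
        sum_le_sum fun x _ => gridEigenvalue_inv_mul_sq_le _ v x
    _ = ∑ a ∈ range (n + 1), ∑ b ∈ range (n + 1), ((a : ℝ) ^ 2 + (b : ℝ) ^ 2)⁻¹ := by
        simp only [Fintype.sum_prod_type, Finset.sum_range]
    _ ≤ 3 * harmonic n := sum_range_sum_range_inv_sq_add_sq_le n
    _ ≤ 3 * (1 + log n) := by gcongr; exact harmonic_le_one_add_log n
    _ ≤ 8 * log (n + 1 : ℕ) := by linarith [log_two_gt_d9]

/-- Diagonal of the 2D-grid Laplacian pseudoinverse grows at most
logarithmically.  There are absolute constants `C, C' > 0` such that for all `N ≥ 2`,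
every diagonal entry of `L†` is at most `C log N`, and consequently every row of
`S = L† Dᵀ` (for `D` an incidence matrix of the grid, i.e. `Dᵀ D = L`) has ℓ2 norm at
most `C' √(log m)` with `m = N²`. -/
theorem grid2d_pseudoinverse_diag_bound :
    ∃ C C' : ℝ, 0 < C ∧ 0 < C' ∧
      ∀ N : ℕ, 2 ≤ N →
        ∀ Ldag : Matrix (Fin N × Fin N) (Fin N × Fin N) ℝ,
          IsMoorePenrose (gridLap2 N) Ldag →
          (∀ v : Fin N × Fin N, Ldag v v ≤ C * Real.log N) ∧
          ∀ (E : ℕ) (D : Matrix (Fin E) (Fin N × Fin N) ℝ),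
            Dᵀ * D = gridLap2 N →
            ∀ v : Fin N × Fin N,
              Real.sqrt (∑ j, ((Ldag * Dᵀ) v j) ^ 2)
                ≤ C' * Real.sqrt (Real.log ((N : ℝ) ^ 2)) := by
  refine ⟨8, 2, by norm_num, by norm_num, fun N hN Ldag hL => ⟨hL.gridLap2_apply_self_le hN, ?_⟩⟩
  intro E D hD v
  have hdiag := hL.gridLap2_apply_self_le hN v
  rw [← hD] at hL
  rw [hL.sum_sq_mul_transpose_apply v]
  calc √(Ldag v v) ≤ √(2 ^ 2 * log ((N : ℝ) ^ 2)) := by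
        gcongr
        rw [log_pow]
        push_cast
        linarith
    _ = 2 * √(log ((N : ℝ) ^ 2)) := by rw [sqrt_mul (by norm_num), sqrt_sq zero_le_two]
end
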